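/- arXiv:2204.11802 — 11 statements merged into one kernel-verified Lean document; each statement's English description precedes it below -/
import Mathlib

section
/- Let 𝔽 be a field, U a finite-dimensional 𝔽-vector space, and A₁, A₂ subspaces of U. If a linearly independent subset X ⊆ U coordinates A₁ and A₂, then X also coordinates A₁ ∩ A₂ and A₁ + A₂ (i.e., X ∩ (A₁ ∩ A₂) spans A₁ ∩ A₂ and X ∩ (A₁ + A₂) spans A₁ + A₂). -/
open Submodule

section

variable {R M ι : Type*} [Semiring R] [AddCommMonoid M] [Module R M]

/-- Over an independent family, a vector has a unique coefficient vector, so lying in the spans of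
two subfamilies forces its support into their intersection. -/
theorem LinearIndependent.span_image_inter {v : ι → M} (hv : LinearIndependent R v)
    (s t : Set ι) : span R (v '' (s ∩ t)) = span R (v '' s) ⊓ span R (v '' t) := by
  refine le_antisymm (le_inf (span_mono (Set.image_mono Set.inter_subset_left))
    (span_mono (Set.image_mono Set.inter_subset_right))) ?_
  rintro x ⟨hxs, hxt⟩
  obtain ⟨l, hls, rfl⟩ := (Finsupp.mem_span_image_iff_linearCombination R).mp hxs
  obtain ⟨l', hlt, hl'⟩ := (Finsupp.mem_span_image_iff_linearCombination R).mp hxt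
  rw [hv.finsuppLinearCombination_injective hl'] at hlt
  exact (Finsupp.mem_span_image_iff_linearCombination R).mpr
    ⟨l, by rw [Finsupp.supported_inter]; exact ⟨hls, hlt⟩, rfl⟩

theorem LinearIndependent.span_inter_inf_eq {X : Set M}
    (hX : LinearIndependent R (fun x : X => (x : M))) {A B : Submodule R M}
    (hA : span R (X ∩ A) = A) (hB : span R (X ∩ B) = B) :
    span R (X ∩ ↑(A ⊓ B)) = A ⊓ B := by
  have := hX.span_image_inter (Subtype.val ⁻¹' (A : Set M)) (Subtype.val ⁻¹' (B : Set M))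
  rwa [← Set.preimage_inter, Subtype.image_preimage_coe, Subtype.image_preimage_coe,
    Subtype.image_preimage_coe, hA, hB, ← coe_inf] at this

theorem Submodule.span_inter_sup_eq {X : Set M} {A B : Submodule R M}
    (hA : span R (X ∩ A) = A) (hB : span R (X ∩ B) = B) :
    span R (X ∩ ↑(A ⊔ B)) = A ⊔ B := by
  refine le_antisymm (span_le.mpr Set.inter_subset_right) (sup_le ?_ ?_)
  · exact hA.ge.trans (span_mono (Set.inter_subset_inter_right X (SetLike.coe_mono le_sup_left)))
  · exact hB.ge.trans (span_mono (Set.inter_subset_inter_right X (SetLike.coe_mono le_sup_right)))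

end

theorem coordinates_inf_and_sup_general {𝔽 U : Type*} [Field 𝔽] [AddCommGroup U] [Module 𝔽 U]
    (A₁ A₂ : Submodule 𝔽 U) (X : Set U)
    (hX : LinearIndependent 𝔽 (fun x : X => (x : U)))
    (h1 : Submodule.span 𝔽 (X ∩ (A₁ : Set U)) = A₁)
    (h2 : Submodule.span 𝔽 (X ∩ (A₂ : Set U)) = A₂) :
    Submodule.span 𝔽 (X ∩ ((A₁ ⊓ A₂ : Submodule 𝔽 U) : Set U)) = A₁ ⊓ A₂ ∧
    Submodule.span 𝔽 (X ∩ ((A₁ ⊔ A₂ : Submodule 𝔽 U) : Set U)) = A₁ ⊔ A₂ :=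
  ⟨hX.span_inter_inf_eq h1 h2, span_inter_sup_eq h1 h2⟩

/-- If a linearly independent subset `X ⊆ U` coordinates subspaces
`A₁` and `A₂` (i.e. `X ∩ Aᵢ` spans `Aᵢ`), then `X` also coordinates `A₁ ⊓ A₂` and
`A₁ ⊔ A₂`. -/
theorem coordinates_inf_and_sup {𝔽 U : Type*} [Field 𝔽] [AddCommGroup U] [Module 𝔽 U]
    [FiniteDimensional 𝔽 U] (A₁ A₂ : Submodule 𝔽 U) (X : Set U)
    (hX : LinearIndependent 𝔽 (fun x : X => (x : U)))
    (h1 : Submodule.span 𝔽 (X ∩ (A₁ : Set U)) = A₁)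
    (h2 : Submodule.span 𝔽 (X ∩ (A₂ : Set U)) = A₂) :
    Submodule.span 𝔽 (X ∩ ((A₁ ⊓ A₂ : Submodule 𝔽 U) : Set U)) = A₁ ⊓ A₂ ∧
    Submodule.span 𝔽 (X ∩ ((A₁ ⊔ A₂ : Submodule 𝔽 U) : Set U)) = A₁ ⊔ A₂ :=
  coordinates_inf_and_sup_general A₁ A₂ X hX h1 h2
end

section
/- Any quasi-increasing sequence V₁,…,V_m of subspaces of a finite-dimensional vector space over a field is coordinated: there exists a linearly independent subset X of the ambient space such that for every i, X ∩ V_i spans V_i. -/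
/-!
Build `X` along the sequence. Suppose `X ⊆ V₁ + ⋯ + V_{r-1}` coordinates `V₁, …, V_{r-1}`,
and extend `X` by vectors of `V_r` to a basis `B` of `span (X ∪ V_r)`. Every `v ∈ V_r` is
`p + s` with `p ∈ span X` and `s ∈ span (B ∩ V_r)`, so `p ∈ V_r ∩ (V₁ + ⋯ + V_{r-1})`. By
quasi-increasingness this intersection is the sum of the `V_i ⊆ V_r` with `i < r`, each spanned
by `X ∩ V_i ⊆ B ∩ V_r`; hence `v ∈ span (B ∩ V_r)`.
-/

open Submodule Set

section Ring

variable {R M : Type*} [Ring R] [AddCommGroup M] [Module R M]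

theorem Submodule.span_inter_eq_of_subset {X B : Set M} {V : Submodule R M} (hXB : X ⊆ B)
    (hX : span R (X ∩ V) = V) : span R (B ∩ V) = V :=
  le_antisymm (span_le.2 inter_subset_right)
    (hX.symm.le.trans (span_mono (inter_subset_inter_left _ hXB)))

theorem Submodule.span_inter_eq_of_inf_le {X B : Set M} {P V : Submodule R M} (hXP : X ⊆ P)
    (hPV : P ⊓ V ≤ span R (X ∩ V)) (hXB : X ⊆ B) (hBXV : B ⊆ X ∪ V) (hVB : V ≤ span R B) :
    span R (B ∩ V) = V := by
  refine le_antisymm (span_le.2 inter_subset_right) fun v hv => ?_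
  have hBsplit : span R B ≤ span R X ⊔ span R (B ∩ V) := by
    refine span_le.2 fun b hb => ?_
    rcases hBXV hb with hbX | hbV
    · exact mem_sup_left (subset_span hbX)
    · exact mem_sup_right (subset_span ⟨hb, hbV⟩)
  obtain ⟨p, hp, s, hs, rfl⟩ := mem_sup.1 (hBsplit (hVB hv))
  have hsV : s ∈ V := span_le.2 inter_subset_right hs
  have hpV : p ∈ V := by simpa using sub_mem hv hsV
  have hpXV : p ∈ span R (X ∩ V) := hPV ⟨span_le.2 hXP hp, hpV⟩
  exact add_mem (span_mono (inter_subset_inter_left _ hXB) hpXV) hs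

end Ring

section DivisionRing

variable {K U : Type*} [DivisionRing K] [AddCommGroup U] [Module K U]

theorem exists_linearIndepOn_coordinating_prefix {m : ℕ} (V : Fin m → Submodule K U)
    (hqi : ∀ r : Fin m,
      V r ⊓ (⨆ i, ⨆ _ : i < r, V i) ≤ ⨆ i, ⨆ _ : i < r ∧ V i ≤ V r, V i) :
    ∀ n ≤ m, ∃ X : Set U, LinearIndepOn K id X ∧ X ⊆ ↑(⨆ i : Fin m, ⨆ _ : (i : ℕ) < n, V i) ∧
      ∀ i : Fin m, (i : ℕ) < n → span K (X ∩ V i) = V i := by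
  intro n
  induction n with
  | zero =>
    exact fun _ => ⟨∅, linearIndepOn_empty K id, empty_subset _, fun _ h => absurd h (by omega)⟩
  | succ n ih =>
    intro hn
    obtain ⟨X, hXind, hXP, hXV⟩ := ih (by omega)
    let r : Fin m := ⟨n, hn⟩
    obtain ⟨B, hBXV, hXB, hXVB, hBind⟩ :=
      exists_linearIndepOn_id_extension hXind (subset_union_left (t := (V r : Set U)))
    have hPV : (⨆ i : Fin m, ⨆ _ : (i : ℕ) < n, V i) ⊓ V r ≤ span K (X ∩ V r) := by
      rw [inf_comm]
      refine (hqi r).trans (iSup₂_le fun i hi => ?_)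
      exact (hXV i hi.1).symm.le.trans (span_mono (inter_subset_inter_right _ hi.2))
    refine ⟨B, hBind, fun b hb => ?_, fun i hi => ?_⟩
    · have hP : (⨆ i : Fin m, ⨆ _ : (i : ℕ) < n, V i) ≤ ⨆ i : Fin m, ⨆ _ : (i : ℕ) < n + 1, V i :=
        iSup₂_mono' fun i hi => ⟨i, by omega, le_rfl⟩
      rcases hBXV hb with hbX | hbV
      · exact hP (hXP hbX)
      · exact mem_iSup_of_mem r (mem_iSup_of_mem (by simp [r]) hbV)
    · rcases Nat.lt_succ_iff_lt_or_eq.1 hi with hlt | heq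
      · exact span_inter_eq_of_subset hXB (hXV i hlt)
      · obtain rfl : i = r := Fin.ext heq
        exact span_inter_eq_of_inf_le hXP hPV hXB hBXV (subset_union_right.trans hXVB)

end DivisionRing

theorem quasiIncreasing_coordinated_general {𝔽 U : Type*} [Field 𝔽] [AddCommGroup U] [Module 𝔽 U]
    {m : ℕ} (V : Fin m → Submodule 𝔽 U)
    (hqi : ∀ r : Fin m,
      V r ⊓ (⨆ i, ⨆ _ : i < r, V i) ≤ ⨆ i, ⨆ _ : i < r ∧ V i ≤ V r, V i) :
    ∃ X : Set U, LinearIndependent 𝔽 (fun x : X => (x : U)) ∧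
      ∀ i, Submodule.span 𝔽 (X ∩ (V i : Set U)) = V i := by
  obtain ⟨X, hXind, -, hXV⟩ := exists_linearIndepOn_coordinating_prefix V hqi m le_rfl
  exact ⟨X, hXind, fun i => hXV i i.isLt⟩

/-- Any quasi-increasing sequence `V₁, …, V_m` of subspaces of a
finite-dimensional vector space is coordinated: there is a linearly independent subset
`X` of the ambient space such that `X ∩ V_i` spans `V_i` for every `i`.
Quasi-increasing means that for every `r`,
`V_r ∩ (V₁ + ⋯ + V_{r-1}) ⊆ Σ_{i < r, V_i ⊆ V_r} V_i`. -/
theorem quasiIncreasing_coordinated {𝔽 U : Type*} [Field 𝔽] [AddCommGroup U] [Module 𝔽 U]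
    [FiniteDimensional 𝔽 U] {m : ℕ} (V : Fin m → Submodule 𝔽 U)
    (hqi : ∀ r : Fin m,
      V r ⊓ (⨆ i, ⨆ _ : i < r, V i) ≤ ⨆ i, ⨆ _ : i < r ∧ V i ≤ V r, V i) :
    ∃ X : Set U, LinearIndependent 𝔽 (fun x : X => (x : U)) ∧
      ∀ i, Submodule.span 𝔽 (X ∩ (V i : Set U)) = V i :=
  quasiIncreasing_coordinated_general V hqi
end

section
/- Let A, B, C be subspaces of a finite-dimensional vector space U over a field. Then the six subspaces A ∩ B ∩ C, A ∩ B, A ∩ C, B ∩ C, A, B are coordinated, i.e., there is a single linearly independent subset X ⊆ U such that X ∩ V spans V for each of these six subspaces V. -/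
/-!
Work from the bottom of the lattice upwards. Take a basis of `A ⊓ B ⊓ C` and extend it
separately to bases of `A ⊓ B`, `A ⊓ C` and `B ⊓ C`. Two independent sets that share a subset
spanning the intersection of their spans have independent union; so the bases of `A ⊓ B` and
`A ⊓ C` glue and extend to a basis of `A`, those of `A ⊓ B` and `B ⊓ C` to a basis of `B`, and
finally the bases of `A` and `B`, which share the basis of `A ⊓ B`, glue to the required `X`.
-/

open Submodule Set

section Ring

variable {R M : Type*} [Ring R] [AddCommGroup M] [Module R M]

theorem LinearIndepOn.disjoint_span_diff {s t : Set M} (ht : LinearIndepOn R id t) (hst : s ⊆ t) :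
    Disjoint (span R s) (span R (t \ s)) := by
  rw [← union_sdiff_cancel hst, linearIndepOn_id_union_iff disjoint_sdiff_right] at ht
  exact ht.2.2

theorem LinearIndepOn.id_union_of_span_inf_le {s t₁ t₂ : Set M}
    (h₁ : LinearIndepOn R id t₁) (h₂ : LinearIndepOn R id t₂) (hs₁ : s ⊆ t₁) (hs₂ : s ⊆ t₂)
    (hs : span R t₁ ⊓ span R t₂ ≤ span R s) :
    LinearIndepOn R id (t₁ ∪ t₂) := by
  -- `span t₁ ⊓ span (t₂ \ t₁)` lies in `span s`, which meets `span (t₂ \ s)` only in `0`.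
  rw [← union_sdiff_self]
  refine h₁.id_union (h₂.mono sdiff_subset) (disjoint_iff_inf_le.mpr ?_)
  have hdisj : span R s ⊓ span R (t₂ \ t₁) ≤ ⊥ := disjoint_iff_inf_le.mp <|
    (h₂.disjoint_span_diff hs₂).mono_right (span_mono (sdiff_subset_sdiff_right hs₁))
  exact (le_inf ((inf_le_inf_left _ (span_mono sdiff_subset)).trans hs) inf_le_right).trans hdisj

end Ring

section DivisionRing

variable {K V : Type*} [DivisionRing K] [AddCommGroup V] [Module K V]

theorem LinearIndepOn.exists_extension_span_eq {s : Set V} {W : Submodule K V}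
    (hs : LinearIndepOn K id s) (hsW : span K s ≤ W) :
    ∃ t : Set V, s ⊆ t ∧ LinearIndepOn K id t ∧ span K t = W := by
  obtain ⟨t, htW, hst, hWt, ht⟩ := exists_linearIndepOn_id_extension hs (span_le.mp hsW)
  exact ⟨t, hst, ht, le_antisymm (span_le.mpr htW) hWt⟩

theorem LinearIndepOn.exists_union_extension_span_eq {s t₁ t₂ : Set V} {W : Submodule K V}
    (h₁ : LinearIndepOn K id t₁) (h₂ : LinearIndepOn K id t₂) (hs₁ : s ⊆ t₁) (hs₂ : s ⊆ t₂)
    (hs : span K t₁ ⊓ span K t₂ ≤ span K s) (hW : span K t₁ ⊔ span K t₂ ≤ W) :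
    ∃ t : Set V, t₁ ∪ t₂ ⊆ t ∧ LinearIndepOn K id t ∧ span K t = W :=
  (h₁.id_union_of_span_inf_le h₂ hs₁ hs₂ hs).exists_extension_span_eq (by rwa [span_union])

end DivisionRing

theorem Submodule.span_inter_eq_of_subset_s4 {R M : Type*} [Semiring R] [AddCommMonoid M]
    [Module R M] {t X : Set M} {W : Submodule R M} (htX : t ⊆ X) (ht : span R t = W) :
    span R (X ∩ W) = W :=
  le_antisymm (span_le.mpr inter_subset_right)
    (ht ▸ span_mono (subset_inter htX subset_span))

theorem six_subspaces_coordinated_general {𝔽 U : Type*} [Field 𝔽] [AddCommGroup U] [Module 𝔽 U]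
    (A B C : Submodule 𝔽 U) :
    ∃ X : Set U, LinearIndependent 𝔽 (fun x : X => (x : U)) ∧
      Submodule.span 𝔽 (X ∩ ((A ⊓ B ⊓ C : Submodule 𝔽 U) : Set U)) = A ⊓ B ⊓ C ∧
      Submodule.span 𝔽 (X ∩ ((A ⊓ B : Submodule 𝔽 U) : Set U)) = A ⊓ B ∧
      Submodule.span 𝔽 (X ∩ ((A ⊓ C : Submodule 𝔽 U) : Set U)) = A ⊓ C ∧
      Submodule.span 𝔽 (X ∩ ((B ⊓ C : Submodule 𝔽 U) : Set U)) = B ⊓ C ∧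
      Submodule.span 𝔽 (X ∩ (A : Set U)) = A ∧
      Submodule.span 𝔽 (X ∩ (B : Set U)) = B := by
  obtain ⟨tABC, -, hABC, spABC⟩ :=
    (linearIndepOn_empty 𝔽 id).exists_extension_span_eq (W := A ⊓ B ⊓ C) (by simp)
  obtain ⟨tAB, ABC_AB, hAB, spAB⟩ :=
    hABC.exists_extension_span_eq (spABC.trans_le inf_le_left)
  obtain ⟨tAC, ABC_AC, hAC, spAC⟩ :=
    hABC.exists_extension_span_eq (spABC.trans_le (inf_le_inf_right _ inf_le_left))
  obtain ⟨tBC, ABC_BC, hBC, spBC⟩ :=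
    hABC.exists_extension_span_eq (spABC.trans_le (inf_le_inf_right _ inf_le_right))
  obtain ⟨tA, AB_AC_A, hA, spA⟩ := hAB.exists_union_extension_span_eq hAC (W := A) ABC_AB ABC_AC
    (by rw [spAB, spAC, spABC]; exact inf_le_inf_left _ inf_le_right)
    (by rw [spAB, spAC]; exact sup_le inf_le_left inf_le_left)
  obtain ⟨tB, AB_BC_B, hB, spB⟩ := hAB.exists_union_extension_span_eq hBC (W := B) ABC_AB ABC_BC
    (by rw [spAB, spBC, spABC]; exact inf_le_inf_left _ inf_le_right)
    (by rw [spAB, spBC]; exact sup_le inf_le_right inf_le_left)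
  have AB_A : tAB ⊆ tA := subset_union_left.trans AB_AC_A
  have AB_B : tAB ⊆ tB := subset_union_left.trans AB_BC_B
  refine ⟨tA ∪ tB, hA.id_union_of_span_inf_le hB AB_A AB_B (by rw [spA, spB, spAB]),
    span_inter_eq_of_subset_s4 ((ABC_AB.trans AB_A).trans subset_union_left) spABC,
    span_inter_eq_of_subset_s4 (AB_A.trans subset_union_left) spAB,
    span_inter_eq_of_subset_s4 ((subset_union_right.trans AB_AC_A).trans subset_union_left) spAC,
    span_inter_eq_of_subset_s4 ((subset_union_right.trans AB_BC_B).trans subset_union_right) spBC,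
    span_inter_eq_of_subset_s4 subset_union_left spA,
    span_inter_eq_of_subset_s4 subset_union_right spB⟩

/-- For any subspaces `A, B, C` of a finite-dimensional vector space,
the six subspaces `A ∩ B ∩ C, A ∩ B, A ∩ C, B ∩ C, A, B` are coordinated: some single
linearly independent subset `X` satisfies that `X ∩ V` spans `V` for each of them. -/
theorem six_subspaces_coordinated {𝔽 U : Type*} [Field 𝔽] [AddCommGroup U] [Module 𝔽 U]
    [FiniteDimensional 𝔽 U] (A B C : Submodule 𝔽 U) :
    ∃ X : Set U, LinearIndependent 𝔽 (fun x : X => (x : U)) ∧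
      Submodule.span 𝔽 (X ∩ ((A ⊓ B ⊓ C : Submodule 𝔽 U) : Set U)) = A ⊓ B ⊓ C ∧
      Submodule.span 𝔽 (X ∩ ((A ⊓ B : Submodule 𝔽 U) : Set U)) = A ⊓ B ∧
      Submodule.span 𝔽 (X ∩ ((A ⊓ C : Submodule 𝔽 U) : Set U)) = A ⊓ C ∧
      Submodule.span 𝔽 (X ∩ ((B ⊓ C : Submodule 𝔽 U) : Set U)) = B ⊓ C ∧
      Submodule.span 𝔽 (X ∩ (A : Set U)) = A ∧
      Submodule.span 𝔽 (X ∩ (B : Set U)) = B :=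
  six_subspaces_coordinated_general A B C
end

section
/- Let A, B, C be subspaces of a finite-dimensional vector space U over a field, and let D be a subspace with D ⊆ A ∩ B. Then the eight subspaces A ∩ B ∩ C ∩ D, A ∩ B ∩ C, D, A ∩ B, A ∩ C, B ∩ C, A, B are coordinated. -/
/-!
A linearly independent set `X` extends, by Zorn's lemma inside `X ∪ V`, to one spanning
`span X ⊔ V`, and the new set coordinates `V` as soon as `V ⊓ span X` lies in a subspace `W ≤ V`
already coordinated by `X`. Adding the eight subspaces in the order
`A ⊓ B ⊓ C ⊓ D, A ⊓ B ⊓ C, D, A ⊓ B, A ⊓ C, B ⊓ C, A, B`, each intersection `V ⊓ span X` is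
such a `W`; for `A` and `B` this is the modular law of the subspace lattice.
-/

open Submodule Set

section

variable {𝔽 U : Type*} [DivisionRing 𝔽] [AddCommGroup U] [Module 𝔽 U]

def Coordinates (X : Set U) (W : Submodule 𝔽 U) : Prop :=
  span 𝔽 (X ∩ W) = W

namespace Coordinates

variable {X Y : Set U} {W : Submodule 𝔽 U}

theorem of_le (h : W ≤ span 𝔽 (X ∩ W)) : Coordinates X W :=
  le_antisymm (span_le.2 inter_subset_right) h

theorem mono (h : Coordinates X W) (hXY : X ⊆ Y) : Coordinates Y W :=
  of_le (h.ge.trans (span_mono (inter_subset_inter_left _ hXY)))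

theorem sup {V : Submodule 𝔽 U} (hV : Coordinates X V) (hW : Coordinates X W) :
    Coordinates X (V ⊔ W) :=
  of_le <| sup_le
    (hV.ge.trans (span_mono (inter_subset_inter_right _ (SetLike.coe_mono le_sup_left))))
    (hW.ge.trans (span_mono (inter_subset_inter_right _ (SetLike.coe_mono le_sup_right))))

end Coordinates

theorem coordinates_span (X : Set U) : Coordinates X (span 𝔽 X) := by
  rw [Coordinates, inter_eq_left.2 subset_span]

theorem LinearIndepOn.exists_superset_coordinates {X : Set U} (hX : LinearIndepOn 𝔽 id X)
    {V W : Submodule 𝔽 U} (hW : Coordinates X W) (hWV : W ≤ V) (hVX : V ⊓ span 𝔽 X ≤ W) :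
    ∃ Y, X ⊆ Y ∧ LinearIndepOn 𝔽 id Y ∧ span 𝔽 Y = span 𝔽 X ⊔ V ∧ Coordinates Y V := by
  obtain ⟨Y, hYXV, hXY, hXVY, hY⟩ :=
    exists_linearIndepOn_id_extension hX (subset_union_left (t := (V : Set U)))
  have hspan : span 𝔽 Y = span 𝔽 X ⊔ V := by
    rw [← V.span_eq, ← span_union]
    exact le_antisymm (span_mono hYXV) (span_le.2 hXVY)
  refine ⟨Y, hXY, hY, hspan, Coordinates.of_le fun v hv => ?_⟩
  have hv' : v ∈ span 𝔽 (Y ∩ V) ⊔ span 𝔽 (Y \ V) := by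
    rw [← span_union, inter_union_sdiff]
    exact hXVY (Or.inr hv)
  obtain ⟨a, ha, b, hb, rfl⟩ := mem_sup.1 hv'
  have haV : a ∈ V := span_le.2 inter_subset_right ha
  have hbX : b ∈ span 𝔽 X := span_mono (fun y hy => (hYXV hy.1).resolve_right hy.2) hb
  have hbW : b ∈ W := hVX ⟨(V.add_mem_iff_right haV).1 hv, hbX⟩
  exact add_mem ha (hW.ge.trans (span_mono (inter_subset_inter hXY hWV)) hbW)

theorem exists_coordinates_inf_left_right (P Q : Submodule 𝔽 U) :
    ∃ X : Set U, LinearIndepOn 𝔽 id X ∧ span 𝔽 X = P ⊔ Q ∧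
      Coordinates X (P ⊓ Q) ∧ Coordinates X P ∧ Coordinates X Q := by
  obtain ⟨X₁, -, hX₁, hspan₁, hPQ⟩ := LinearIndepOn.exists_superset_coordinates (V := P ⊓ Q)
    (linearIndepOn_empty 𝔽 id) (coordinates_span ∅) (by simp) inf_le_right
  rw [span_empty, bot_sup_eq] at hspan₁
  obtain ⟨X₂, h₁₂, hX₂, hspan₂, hP⟩ :=
    hX₁.exists_superset_coordinates hPQ inf_le_left (by order)
  obtain ⟨X₃, h₂₃, hX₃, hspan₃, hQ⟩ :=
    hX₂.exists_superset_coordinates (hPQ.mono h₁₂) inf_le_right (by order)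
  exact ⟨X₃, hX₃, by order, hPQ.mono (h₁₂.trans h₂₃), hP.mono h₂₃, hQ⟩

theorem LinearIndepOn.exists_superset_coordinates_pairwise_inf {X : Set U}
    (hX : LinearIndepOn 𝔽 id X) {A B C : Submodule 𝔽 U} (hXAB : span 𝔽 X ≤ A ⊓ B)
    (hABC : Coordinates X (A ⊓ B ⊓ C)) :
    ∃ Y, X ⊆ Y ∧ LinearIndepOn 𝔽 id Y ∧ Coordinates Y (A ⊓ B) ∧ Coordinates Y (A ⊓ C) ∧
      Coordinates Y (B ⊓ C) ∧ Coordinates Y A ∧ Coordinates Y B := by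
  obtain ⟨X₁, h₀₁, hX₁, hspan₁, hAB⟩ :=
    hX.exists_superset_coordinates (coordinates_span X) hXAB inf_le_right
  obtain ⟨X₂, h₁₂, hX₂, hspan₂, hAC⟩ :=
    hX₁.exists_superset_coordinates (V := A ⊓ C) (hABC.mono h₀₁) (by order) (by order)
  obtain ⟨X₃, h₂₃, hX₃, hspan₃, hBC⟩ :=
    hX₂.exists_superset_coordinates (V := B ⊓ C) (hABC.mono (h₀₁.trans h₁₂)) (by order)
      (by order)
  have hmodA : (A ⊓ B ⊔ A ⊓ C ⊔ B ⊓ C) ⊓ A = A ⊓ B ⊔ A ⊓ C ⊔ B ⊓ C ⊓ A :=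
    sup_inf_assoc_of_le _ (by order)
  obtain ⟨X₄, h₃₄, hX₄, hspan₄, hA⟩ := hX₃.exists_superset_coordinates (V := A)
    ((hAB.mono (h₁₂.trans h₂₃)).sup (hAC.mono h₂₃)) (by order) (by order)
  have hmodB : (B ⊓ C ⊔ A) ⊓ B = B ⊓ C ⊔ A ⊓ B := sup_inf_assoc_of_le _ inf_le_left
  obtain ⟨X₅, h₄₅, hX₅, -, hB⟩ := hX₄.exists_superset_coordinates (V := B)
    ((hAB.mono (h₁₂.trans (h₂₃.trans h₃₄))).sup (hBC.mono h₃₄)) (by order) (by order)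
  exact ⟨X₅, h₀₁.trans (h₁₂.trans (h₂₃.trans (h₃₄.trans h₄₅))), hX₅,
    hAB.mono (h₁₂.trans (h₂₃.trans (h₃₄.trans h₄₅))), hAC.mono (h₂₃.trans (h₃₄.trans h₄₅)),
    hBC.mono (h₃₄.trans h₄₅), hA.mono h₄₅, hB⟩

end

theorem eight_subspaces_coordinated_general {𝔽 U : Type*} [Field 𝔽] [AddCommGroup U] [Module 𝔽 U]
    (A B C D : Submodule 𝔽 U) (hD : D ≤ A ⊓ B) :
    ∃ X : Set U, LinearIndependent 𝔽 (fun x : X => (x : U)) ∧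
      Submodule.span 𝔽 (X ∩ ((A ⊓ B ⊓ C ⊓ D : Submodule 𝔽 U) : Set U)) = A ⊓ B ⊓ C ⊓ D ∧
      Submodule.span 𝔽 (X ∩ ((A ⊓ B ⊓ C : Submodule 𝔽 U) : Set U)) = A ⊓ B ⊓ C ∧
      Submodule.span 𝔽 (X ∩ (D : Set U)) = D ∧
      Submodule.span 𝔽 (X ∩ ((A ⊓ B : Submodule 𝔽 U) : Set U)) = A ⊓ B ∧
      Submodule.span 𝔽 (X ∩ ((A ⊓ C : Submodule 𝔽 U) : Set U)) = A ⊓ C ∧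
      Submodule.span 𝔽 (X ∩ ((B ⊓ C : Submodule 𝔽 U) : Set U)) = B ⊓ C ∧
      Submodule.span 𝔽 (X ∩ (A : Set U)) = A ∧
      Submodule.span 𝔽 (X ∩ (B : Set U)) = B := by
  obtain ⟨X, hX, hspan, hABCD, hABC, hD'⟩ := exists_coordinates_inf_left_right (A ⊓ B ⊓ C) D
  obtain ⟨Y, hXY, hY, hAB, hAC, hBC, hA, hB⟩ :=
    hX.exists_superset_coordinates_pairwise_inf (hspan.le.trans (sup_le inf_le_left hD)) hABC
  exact ⟨Y, hY, hABCD.mono hXY, hABC.mono hXY, hD'.mono hXY, hAB, hAC, hBC, hA, hB⟩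

/-- For subspaces `A, B, C` of a finite-dimensional vector space and a
subspace `D ⊆ A ∩ B`, the eight subspaces
`A ∩ B ∩ C ∩ D, A ∩ B ∩ C, D, A ∩ B, A ∩ C, B ∩ C, A, B` are coordinated. -/
theorem eight_subspaces_coordinated {𝔽 U : Type*} [Field 𝔽] [AddCommGroup U] [Module 𝔽 U]
    [FiniteDimensional 𝔽 U] (A B C D : Submodule 𝔽 U) (hD : D ≤ A ⊓ B) :
    ∃ X : Set U, LinearIndependent 𝔽 (fun x : X => (x : U)) ∧
      Submodule.span 𝔽 (X ∩ ((A ⊓ B ⊓ C ⊓ D : Submodule 𝔽 U) : Set U)) = A ⊓ B ⊓ C ⊓ D ∧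
      Submodule.span 𝔽 (X ∩ ((A ⊓ B ⊓ C : Submodule 𝔽 U) : Set U)) = A ⊓ B ⊓ C ∧
      Submodule.span 𝔽 (X ∩ (D : Set U)) = D ∧
      Submodule.span 𝔽 (X ∩ ((A ⊓ B : Submodule 𝔽 U) : Set U)) = A ⊓ B ∧
      Submodule.span 𝔽 (X ∩ ((A ⊓ C : Submodule 𝔽 U) : Set U)) = A ⊓ C ∧
      Submodule.span 𝔽 (X ∩ ((B ⊓ C : Submodule 𝔽 U) : Set U)) = B ⊓ C ∧
      Submodule.span 𝔽 (X ∩ (A : Set U)) = A ∧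
      Submodule.span 𝔽 (X ∩ (B : Set U)) = B :=
  eight_subspaces_coordinated_general A B C D hD
end

section
/- Let A₁,…,A_m be subspaces of a finite-dimensional vector space U over a field. For each i ∈ [m] let Â_i = ∩_{j ≠ i} A_j be the intersection of all the subspaces except A_i, and let V₀ = A₁ ∩ … ∩ A_m. Then the family V₀, Â₁,…,Â_m (all the (m−1)-fold intersections together with the full intersection) is coordinated. -/
/-!
Take a basis `B₀` of `V₀` and extend it to a basis `Bᵢ` of each `Âᵢ`; then
`X = B₀ ∪ ⋃ᵢ (Bᵢ \ B₀)` contains a basis of every member of the family. It is linearly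
independent because the span of `Bᵢ \ B₀` meets the span of all the other pieces trivially:
the latter lies in `Aᵢ`, the former in `Âᵢ`, and it meets `Âᵢ ∩ Aᵢ = V₀` only in `0`.
-/

open Submodule Set

theorem LinearIndepOn.id_union_iUnion {R M ι : Type*} [Ring R] [AddCommGroup M] [Module R M]
    [Finite ι] {s : Set M} {f : ι → Set M} (hs : LinearIndepOn R id s)
    (hf : ∀ i, LinearIndepOn R id (f i))
    (hd : ∀ i, Disjoint (span R (f i)) (span R (s ∪ ⋃ (j) (_ : j ≠ i), f j))) :
    LinearIndepOn R id (s ∪ ⋃ i, f i) := by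
  classical
  cases nonempty_fintype ι
  suffices ∀ t : Finset ι, LinearIndepOn R id (s ∪ ⋃ i ∈ t, f i) by
    simpa using this Finset.univ
  intro t
  induction t using Finset.induction_on with
  | empty => simpa using hs
  | insert a t ha ih =>
    rw [Finset.set_biUnion_insert, union_left_comm]
    refine (hf a).id_union ih ((hd a).mono_right (span_mono ?_))
    exact union_subset_union_right _
      (iUnion₂_subset fun j hj => subset_biUnion_of_mem (ne_of_mem_of_not_mem hj ha))

theorem Submodule.span_inter_eq_of_span_eq {R M : Type*} [Semiring R] [AddCommMonoid M]
    [Module R M] {s X : Set M} {W : Submodule R M} (hsX : s ⊆ X) (hs : span R s = W) :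
    span R (X ∩ W) = W :=
  le_antisymm (span_le.2 inter_subset_right)
    (hs ▸ span_mono (subset_inter hsX fun _ hx => hs ▸ subset_span hx))

section iInfNe

variable {α ι : Type*} [CompleteLattice α] (A : ι → α)

theorem iInf_le_iInf_ne (i : ι) : ⨅ j, A j ≤ ⨅ j, ⨅ _ : j ≠ i, A j :=
  le_iInf₂ fun j _ => iInf_le A j

theorem iInf_ne_le {i j : ι} (h : i ≠ j) : ⨅ k, ⨅ _ : k ≠ i, A k ≤ A j :=
  (iInf_le _ j).trans (iInf_le _ h.symm)

theorem disjoint_of_le_iInf_ne {i : ι} {a b : α} (ha : a ≤ ⨅ j, ⨅ _ : j ≠ i, A j)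
    (hb : b ≤ A i) (haA : Disjoint a (⨅ j, A j)) : Disjoint a b := by
  rw [disjoint_iff_inf_le]
  calc a ⊓ b ≤ a ⊓ ⨅ j, A j := by
        rw [iInf_split_single A i]
        exact le_inf inf_le_left (le_inf (inf_le_right.trans hb) (inf_le_left.trans ha))
    _ ≤ ⊥ := haA.le_bot

end iInfNe

theorem codimOne_intersections_coordinated_general {𝔽 U : Type*} [Field 𝔽] [AddCommGroup U]
    [Module 𝔽 U] {m : ℕ} (A : Fin m → Submodule 𝔽 U) :
    ∃ X : Set U, LinearIndependent 𝔽 (fun x : X => (x : U)) ∧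
      Submodule.span 𝔽 (X ∩ ((⨅ j, A j : Submodule 𝔽 U) : Set U)) = ⨅ j, A j ∧
      ∀ i, Submodule.span 𝔽
          (X ∩ ((⨅ j, ⨅ _ : j ≠ i, A j : Submodule 𝔽 U) : Set U)) =
        ⨅ j, ⨅ _ : j ≠ i, A j := by
  obtain ⟨B₀, hB₀V, hB₀span, hB₀ind⟩ :=
    exists_linearIndependent 𝔽 ((⨅ j, A j : Submodule 𝔽 U) : Set U)
  rw [span_eq] at hB₀span
  choose B hBA hB₀B hAB hBind using fun i =>
    exists_linearIndepOn_id_extension hB₀ind (hB₀V.trans (iInf_le_iInf_ne A i))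
  have hBspan i : span 𝔽 (B i) = ⨅ j, ⨅ _ : j ≠ i, A j := span_eq_of_le _ (hBA i) (hAB i)
  have hB₀_disjoint i : Disjoint (span 𝔽 (B i \ B₀)) (⨅ j, A j) := by
    have hBi := hBind i
    rw [← union_sdiff_cancel (hB₀B i), linearIndepOn_id_union_iff disjoint_sdiff_right,
      hB₀span] at hBi
    exact hBi.2.2.symm
  refine ⟨B₀ ∪ ⋃ i, B i \ B₀, ?_, span_inter_eq_of_span_eq subset_union_left hB₀span,
    fun i => ?_⟩
  · refine LinearIndepOn.id_union_iUnion hB₀ind (fun i => (hBind i).mono sdiff_subset)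
      fun i => ?_
    refine disjoint_of_le_iInf_ne A (span_le.2 (sdiff_subset.trans (hBA i))) (span_le.2 ?_)
      (hB₀_disjoint i)
    exact union_subset (hB₀V.trans (iInf_le A i))
      (iUnion₂_subset fun j hj => sdiff_subset.trans ((hBA j).trans (iInf_ne_le A hj)))
  · refine span_inter_eq_of_span_eq ?_ (hBspan i)
    calc B i ⊆ B₀ ∪ (B i \ B₀) := union_sdiff_self.symm ▸ subset_union_right
      _ ⊆ B₀ ∪ ⋃ i, B i \ B₀ :=
        union_subset_union_right _ (subset_iUnion (fun i => B i \ B₀) i)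

/-- Let `A₁, …, A_m` be subspaces of a finite-dimensional vector space.
For each `i`, let `Â_i = ⋂_{j ≠ i} A_j`, and let `V₀ = A₁ ∩ … ∩ A_m`. Then the family
`V₀, Â₁, …, Â_m` is coordinated. -/
theorem codimOne_intersections_coordinated {𝔽 U : Type*} [Field 𝔽] [AddCommGroup U]
    [Module 𝔽 U] [FiniteDimensional 𝔽 U] {m : ℕ} (A : Fin m → Submodule 𝔽 U) :
    ∃ X : Set U, LinearIndependent 𝔽 (fun x : X => (x : U)) ∧
      Submodule.span 𝔽 (X ∩ ((⨅ j, A j : Submodule 𝔽 U) : Set U)) = ⨅ j, A j ∧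
      ∀ i, Submodule.span 𝔽
          (X ∩ ((⨅ j, ⨅ _ : j ≠ i, A j : Submodule 𝔽 U) : Set U)) =
        ⨅ j, ⨅ _ : j ≠ i, A j :=
  codimOne_intersections_coordinated_general A
end

section
/- Let A₁,…,A_m be subspaces of a finite-dimensional vector space U over a field, and for 1 ≤ k ≤ m let S_k = S_k(A₁,…,A_m) be the span of all k-fold intersections of the A_i. Then DisCoord(A₁,…,A_m) = Σ_{i=1}^m dim(A_i) − Σ_{k=1}^m dim(S_k). -/
/-- The discoordination of `X` with respect to the family `A`:
`Σ_i (dim A_i − |X ∩ A_i|)`. -/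
noncomputable def disCoordX (𝔽 : Type*) [Field 𝔽] {U : Type*} [AddCommGroup U]
    [Module 𝔽 U] {m : ℕ} (X : Set U) (A : Fin m → Submodule 𝔽 U) : ℕ :=
  ∑ i, (Module.finrank 𝔽 ↥(A i) - (X ∩ (A i : Set U)).ncard)

/-- The discoordination of the family `A₁, …, A_m`: the minimum of
`disCoordX` over all linearly independent subsets `X` of the ambient space. -/
noncomputable def DisCoord (𝔽 : Type*) [Field 𝔽] {U : Type*} [AddCommGroup U]
    [Module 𝔽 U] {m : ℕ} (A : Fin m → Submodule 𝔽 U) : ℕ :=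
  sInf { n : ℕ | ∃ X : Set U, LinearIndependent 𝔽 (fun x : X => (x : U)) ∧
    n = disCoordX 𝔽 X A }

/-- `S_k(A₁,…,A_m)`: the span of all `k`-fold intersections of the `A_i`. -/
noncomputable def interSpan (𝔽 : Type*) [Field 𝔽] {U : Type*} [AddCommGroup U]
    [Module 𝔽 U] {m : ℕ} (A : Fin m → Submodule 𝔽 U) (k : ℕ) : Submodule 𝔽 U :=
  ⨆ (s : Finset (Fin m)) (_ : s.card = k), ⨅ i ∈ s, A i

/-!
Count the incidences `x ∈ A i` with `x ∈ X` by the number of `A i` containing `x`: then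
`Σ_i |X ∩ A_i| = Σ_k |X ∩ L_k|`, where `L_k = {x | k ≤ memCount A x}` is the set of vectors
lying in at least `k` of the `A_i`, i.e. the union of the `k`-fold intersections, which spans
`S_k`. For linearly independent `X` each term is at most `dim S_k`. Since the `L_k` decrease, a
basis of `S_m` taken from `L_m` extends to one of `S_{m-1}` taken from `L_{m-1}`, and so on down
to `S_1`; the resulting `X` meets every `L_k` in a basis of `S_k`, so all the bounds are attained
at once.
-/

open Finset Module Submodule

section LinearIndependence

variable {K V : Type*}

theorem LinearIndepOn.finrank_span_eq_ncard [Ring K] [StrongRankCondition K] [AddCommGroup V]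
    [Module K V] {s : Set V} (hs : LinearIndepOn K id s) : finrank K (span K s) = s.ncard := by
  have := toENat_rank_span_set hs
  rw [Set.image_id] at this
  rw [Set.ncard_def, ← this, finrank, Cardinal.toNat_toENat]

variable [Field K] [AddCommGroup V] [Module K V]

theorem LinearIndepOn.ncard_le_finrank_of_subset [FiniteDimensional K V] {s : Set V}
    (hs : LinearIndepOn K id s) {W : Submodule K V} (hsW : s ⊆ W) : s.ncard ≤ finrank K W := by
  rw [← hs.finrank_span_eq_ncard]
  exact Submodule.finrank_mono (span_le.2 hsW)

theorem exists_linearIndepOn_span_inter_eq {T : ℕ → Set V} (hT : Antitone T) (n : ℕ) :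
    ∃ X ⊆ T 0, LinearIndepOn K id X ∧ ∀ k ≤ n, span K (X ∩ T k) = span K (T k) := by
  induction n generalizing T with
  | zero =>
    obtain ⟨X, hXT, hspan, hX⟩ := exists_linearIndependent K (T 0)
    refine ⟨X, hXT, hX, fun k hk => ?_⟩
    obtain rfl := Nat.le_zero.1 hk
    rwa [Set.inter_eq_left.2 hXT]
  | succ n ih =>
    obtain ⟨Y, hYT, hY, hYspan⟩ :=
      ih (T := fun k => T (k + 1)) fun a b h => hT (Nat.succ_le_succ h)
    obtain ⟨X, hXT, hYX, hTX, hX⟩ :=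
      exists_linearIndepOn_id_extension hY (hYT.trans (hT (Nat.zero_le 1)))
    refine ⟨X, hXT, hX, fun k hk => ?_⟩
    rcases k with _ | k
    · rw [Set.inter_eq_left.2 hXT]
      exact le_antisymm (span_mono hXT) (span_le.2 hTX)
    · refine le_antisymm (span_mono Set.inter_subset_right) ?_
      rw [← hYspan k (by omega)]
      exact span_mono (Set.inter_subset_inter_left _ hYX)

end LinearIndependence

theorem Finset.sum_eq_sum_Icc_card_filter_le {β : Type*} (s : Finset β) (f : β → ℕ) {n : ℕ}
    (hf : ∀ x ∈ s, f x ≤ n) : ∑ x ∈ s, f x = ∑ k ∈ Icc 1 n, #{x ∈ s | k ≤ f x} := by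
  have hfilter : ∀ x ∈ s, f x = #{k ∈ Icc 1 n | k ≤ f x} := fun x hx => by
    rw [show {k ∈ Icc 1 n | k ≤ f x} = Icc 1 (f x) by
      ext k; simp only [mem_filter, mem_Icc]; have := hf x hx; omega]
    simp
  rw [sum_congr rfl hfilter]
  simp only [card_filter]
  exact sum_comm

section MemCount

variable {ι α S : Type*} [Fintype ι] [SetLike S α]

open scoped Classical in
noncomputable def memCount (A : ι → S) (x : α) : ℕ := #{i | x ∈ A i}

theorem memCount_le_card (A : ι → S) (x : α) : memCount A x ≤ Fintype.card ι := by
  classical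
  exact card_filter_le _ _

theorem le_memCount_iff {A : ι → S} {k : ℕ} {x : α} :
    k ≤ memCount A x ↔ ∃ s : Finset ι, #s = k ∧ ∀ i ∈ s, x ∈ A i := by
  classical
  unfold memCount
  constructor
  · intro hk
    obtain ⟨s, hs, rfl⟩ := exists_subset_card_eq hk
    exact ⟨s, rfl, fun i hi => (mem_filter.1 (hs hi)).2⟩
  · rintro ⟨s, rfl, hs⟩
    exact card_le_card fun i hi => by simpa using hs i hi

theorem sum_ncard_inter_eq_sum_ncard_inter_setOf_le_memCount (A : ι → S) {X : Set α}
    (hX : X.Finite) :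
    ∑ i, (X ∩ A i).ncard =
      ∑ k ∈ Icc 1 (Fintype.card ι), (X ∩ {x | k ≤ memCount A x}).ncard := by
  classical
  lift X to Finset α using hX
  have hinter (p : α → Prop) [DecidablePred p] :
      ((X : Set α) ∩ {x | p x}).ncard = #{x ∈ X | p x} := by
    rw [← Set.ncard_coe_finset, coe_filter]
    rfl
  have hA (i : ι) : ((X : Set α) ∩ A i).ncard = #{x ∈ X | x ∈ A i} := hinter (· ∈ A i)
  simp only [hA, hinter]
  calc ∑ i, #{x ∈ X | x ∈ A i} = ∑ x ∈ X, memCount A x :=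
        sum_card_bipartiteAbove_eq_sum_card_bipartiteBelow (fun i x => x ∈ A i)
    _ = _ := sum_eq_sum_Icc_card_filter_le X _ fun x _ => memCount_le_card A x

end MemCount

section DisCoord

variable {𝔽 U : Type*} [Field 𝔽] [AddCommGroup U] [Module 𝔽 U] {m : ℕ}

theorem span_setOf_le_memCount (A : Fin m → Submodule 𝔽 U) (k : ℕ) :
    span 𝔽 {x | k ≤ memCount A x} = interSpan 𝔽 A k := by
  have hunion : {x | k ≤ memCount A x} =
      ⋃ (s : Finset (Fin m)) (_ : #s = k), ((⨅ i ∈ s, A i : Submodule 𝔽 U) : Set U) := by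
    ext x
    simp [le_memCount_iff]
  rw [hunion, span_iUnion₂, interSpan]
  simp only [span_eq]

theorem exists_linearIndepOn_ncard_inter_setOf_le_memCount_eq (A : Fin m → Submodule 𝔽 U) :
    ∃ X : Set U, LinearIndepOn 𝔽 id X ∧
      ∀ k ≤ m, (X ∩ {x | k ≤ memCount A x}).ncard = finrank 𝔽 (interSpan 𝔽 A k) := by
  obtain ⟨X, -, hX, hspan⟩ := exists_linearIndepOn_span_inter_eq (K := 𝔽)
    (T := fun k => {x | k ≤ memCount A x}) (fun k j hkj x hx => le_trans hkj hx) m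
  refine ⟨X, hX, fun k hk => ?_⟩
  rw [← span_setOf_le_memCount, ← hspan k hk,
    (hX.mono Set.inter_subset_left).finrank_span_eq_ncard]

variable [FiniteDimensional 𝔽 U]

theorem ncard_inter_setOf_le_memCount_le_finrank_interSpan (A : Fin m → Submodule 𝔽 U)
    {X : Set U} (hX : LinearIndepOn 𝔽 id X) (k : ℕ) :
    (X ∩ {x | k ≤ memCount A x}).ncard ≤ finrank 𝔽 (interSpan 𝔽 A k) := by
  refine (hX.mono Set.inter_subset_left).ncard_le_finrank_of_subset ?_
  rw [← span_setOf_le_memCount]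
  exact Set.inter_subset_right.trans subset_span

theorem natCast_disCoordX (A : Fin m → Submodule 𝔽 U) {X : Set U}
    (hX : LinearIndepOn 𝔽 id X) :
    (disCoordX 𝔽 X A : ℤ) = ∑ i, (finrank 𝔽 (A i) : ℤ) -
      ∑ k ∈ Icc 1 m, ((X ∩ {x | k ≤ memCount A x}).ncard : ℤ) := by
  have hle : ∀ i, (X ∩ A i).ncard ≤ finrank 𝔽 (A i) := fun i =>
    (hX.mono Set.inter_subset_left).ncard_le_finrank_of_subset Set.inter_subset_right
  have hlayers := sum_ncard_inter_eq_sum_ncard_inter_setOf_le_memCount A hX.setFinite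
  rw [Fintype.card_fin] at hlayers
  rw [disCoordX, Nat.cast_sum, ← Nat.cast_sum (Icc 1 m), ← hlayers, Nat.cast_sum,
    ← sum_sub_distrib]
  exact sum_congr rfl fun i _ => Nat.cast_sub (hle i)

end DisCoord

/-- The discoordination formula:
`DisCoord(A₁,…,A_m) = Σ_{i=1}^m dim A_i − Σ_{k=1}^m dim S_k`. -/
theorem disCoord_formula {𝔽 U : Type*} [Field 𝔽] [AddCommGroup U] [Module 𝔽 U]
    [FiniteDimensional 𝔽 U] {m : ℕ} (A : Fin m → Submodule 𝔽 U) :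
    (DisCoord 𝔽 A : ℤ) =
      (∑ i, (Module.finrank 𝔽 ↥(A i) : ℤ)) -
        ∑ k ∈ Finset.Icc 1 m, (Module.finrank 𝔽 ↥(interSpan 𝔽 A k) : ℤ) := by
  obtain ⟨X₀, hX₀, hX₀_ncard⟩ := exists_linearIndepOn_ncard_inter_setOf_le_memCount_eq A
  have hX₀_eq : (disCoordX 𝔽 X₀ A : ℤ) = ∑ i, (finrank 𝔽 (A i) : ℤ) -
      ∑ k ∈ Icc 1 m, (finrank 𝔽 (interSpan 𝔽 A k) : ℤ) := by
    rw [natCast_disCoordX A hX₀]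
    exact congrArg _ (sum_congr rfl fun k hk => by rw [hX₀_ncard k (mem_Icc.1 hk).2])
  have hleast : IsLeast {n | ∃ X : Set U, LinearIndependent 𝔽 (fun x : X => (x : U)) ∧
      n = disCoordX 𝔽 X A} (disCoordX 𝔽 X₀ A) := by
    refine ⟨⟨X₀, hX₀, rfl⟩, ?_⟩
    rintro _ ⟨X, hX, rfl⟩
    have : (disCoordX 𝔽 X₀ A : ℤ) ≤ disCoordX 𝔽 X A := by
      rw [hX₀_eq, natCast_disCoordX A hX]
      gcongr with k
      exact_mod_cast ncard_inter_setOf_le_memCount_le_finrank_interSpan A hX k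
    exact_mod_cast this
  rw [DisCoord, hleast.csInf_eq, hX₀_eq]
end

section
/- Let A₁,…,A_m be subspaces of a finite-dimensional vector space U over a field that all factor through a decomposition U₁,…,U_r of U. Then DisCoord computed in U equals the sum of the discoordinations of the restricted families: DisCoord^U(A₁,…,A_m) = Σ_{j=1}^r DisCoord^{U_j}(A₁ ∩ U_j, …, A_m ∩ U_j). -/
/-- A finite family of subspaces is linearly independent: whenever a sum of elements,
one from each subspace, is zero, every term is zero. -/
def SubspacesIndep {𝔽 V : Type*} [Field 𝔽] [AddCommGroup V] [Module 𝔽 V]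
    {ι : Type*} [Fintype ι] (Us : ι → Submodule 𝔽 V) : Prop :=
  ∀ v : ι → V, (∀ i, v i ∈ Us i) → ∑ i, v i = 0 → ∀ i, v i = 0

open Set Submodule Module

section IndependentSubmodules

variable {R M ι : Type*}

theorem Submodule.exists_sum_eq_of_mem_iSup [Semiring R] [AddCommMonoid M] [Module R M]
    [Fintype ι] {p : ι → Submodule R M} {x : M} (hx : x ∈ ⨆ i, p i) :
    ∃ v : ι → M, (∀ i, v i ∈ p i) ∧ ∑ i, v i = x := by
  obtain ⟨f, hf, rfl⟩ := (mem_iSup_iff_exists_finsupp p x).1 hx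
  exact ⟨f, hf, (Finsupp.sum_fintype f (fun _ x => x) fun _ => rfl).symm⟩

theorem iSupIndep.ncard_eq_sum_ncard_inter [Semiring R] [AddCommMonoid M] [Module R M]
    [Fintype ι] {p : ι → Submodule R M} (hp : iSupIndep p) {X : Set M} (hX : X.Finite)
    (h0 : (0 : M) ∉ X) (hXp : X ⊆ ⋃ i, (p i : Set M)) : X.ncard = ∑ i, (X ∩ p i).ncard := by
  have hdisj : Pairwise fun i j => Disjoint (X ∩ p i) (X ∩ p j) := fun i j hij =>
    Set.disjoint_left.2 fun x hi hj =>
      h0 (disjoint_def.1 (hp.pairwiseDisjoint hij) x hi.2 hj.2 ▸ hi.1)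
  rw [← finsum_eq_sum_of_fintype, ← ncard_iUnion_of_finite (fun i => hX.inter_of_left _) hdisj,
    ← inter_iUnion, inter_eq_left.2 hXp]

variable [DivisionRing R] [AddCommGroup M] [Module R M] {p : ι → Submodule R M}

theorem iSupIndep.finrank_iSup [Fintype ι] [FiniteDimensional R M] (hp : iSupIndep p) :
    finrank R ↥(⨆ i, p i) = ∑ i, finrank R ↥(p i) := by
  classical
  rw [iSup_eq_range_dfinsupp_lsum, LinearMap.finrank_range_of_inj hp.dfinsupp_lsum_injective]
  exact finrank_directSum R fun i => ↥(p i)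

theorem iSupIndep.linearIndepOn_iUnion (hp : iSupIndep p) {Y : ι → Set M}
    (hY : ∀ i, LinearIndepOn R id (Y i)) (hYp : ∀ i, Y i ⊆ p i) :
    LinearIndepOn R id (⋃ i, Y i) := by
  refine linearIndepOn_id_iUnion_finite hY fun i t ht hit => ?_
  refine (hp.disjoint_biSup (y := ht.toFinset) (by simpa using hit)).mono
    (span_le.2 (hYp i)) (iSup₂_le fun j hj => ?_)
  exact (span_le.2 (hYp j)).trans (le_biSup p (ht.mem_toFinset.2 hj))

theorem LinearIndepOn.preimage_subtype {X : Set M} (hX : LinearIndepOn R id X)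
    (W : Submodule R M) : LinearIndepOn R id (W.subtype ⁻¹' X) := by
  refine LinearIndepOn.of_comp W.subtype ?_
  rw [Function.comp_id, linearIndepOn_iff_image W.injective_subtype.injOn]
  exact hX.mono (image_preimage_subset _ _)

theorem ncard_inter_le_finrank [FiniteDimensional R M] {X : Set M} (hX : LinearIndepOn R id X)
    (p : Submodule R M) : (X ∩ p).ncard ≤ finrank R p := by
  have hXp : LinearIndepOn R id (X ∩ p) := hX.mono inter_subset_left
  have := (LinearIndependent.setFinite hXp).fintype
  rw [ncard_eq_toFinset_card' (X ∩ p), ← finrank_span_set_eq_card hXp]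
  exact Submodule.finrank_mono (span_le.2 inter_subset_right)

end IndependentSubmodules

section SubspacesIndep

variable {𝔽 U ι : Type*} [Field 𝔽] [AddCommGroup U] [Module 𝔽 U] [Fintype ι]
  {p : ι → Submodule 𝔽 U}

theorem SubspacesIndep.eq_of_sum_eq (hp : SubspacesIndep p) {v w : ι → U}
    (hv : ∀ i, v i ∈ p i) (hw : ∀ i, w i ∈ p i) (h : ∑ i, v i = ∑ i, w i) : v = w := by
  funext i
  refine sub_eq_zero.1 (hp (v - w) (fun i => sub_mem (hv i) (hw i)) ?_ i)
  simp [Finset.sum_sub_distrib, h]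

theorem SubspacesIndep.iSupIndep (hp : SubspacesIndep p) : iSupIndep p := by
  classical
  refine (iSupIndep_iff_finsetSum_eq_zero_imp_eq_zero p).2 fun s v hv hsum i hi => ?_
  have := hp (fun j => if j ∈ s then v j else 0) (fun j => by split_ifs with h <;> simp [hv, h])
    (by rwa [Finset.sum_ite_mem, Finset.univ_inter]) i
  simpa [hi] using this

theorem SubspacesIndep.mem_of_sum_mem (hp : SubspacesIndep p) {A : Submodule 𝔽 U}
    (hA : (⨆ i, A ⊓ p i) = A) {v : ι → U} (hv : ∀ i, v i ∈ p i) (hvA : ∑ i, v i ∈ A) (i : ι) :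
    v i ∈ A := by
  rw [← hA] at hvA
  obtain ⟨w, hw, hwv⟩ := exists_sum_eq_of_mem_iSup hvA
  rw [hp.eq_of_sum_eq hv (fun j => (hw j).2) hwv.symm]
  exact (hw i).1

end SubspacesIndep

section DisCoord

variable {𝔽 U : Type*} [Field 𝔽] [AddCommGroup U] [Module 𝔽 U] {m : ℕ}
  (A : Fin m → Submodule 𝔽 U)

theorem disCoordX_le_of_ncard_inter_le {X X' : Set U}
    (h : ∀ i, (X ∩ A i).ncard ≤ (X' ∩ A i).ncard) : disCoordX 𝔽 X' A ≤ disCoordX 𝔽 X A :=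
  Finset.sum_le_sum fun i _ => Nat.sub_le_sub_left (h i) _

theorem disCoordX_le_of_subset {X X' : Set U} (hX' : X'.Finite) (h : X ⊆ X') :
    disCoordX 𝔽 X' A ≤ disCoordX 𝔽 X A :=
  disCoordX_le_of_ncard_inter_le A fun _ =>
    ncard_le_ncard (inter_subset_inter_left _ h) (hX'.inter_of_left _)

theorem disCoord_le_disCoordX {X : Set U} (hX : LinearIndepOn 𝔽 id X) :
    DisCoord 𝔽 A ≤ disCoordX 𝔽 X A :=
  Nat.sInf_le ⟨X, hX, rfl⟩

theorem exists_disCoordX_eq_disCoord :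
    ∃ X : Set U, LinearIndepOn 𝔽 id X ∧ disCoordX 𝔽 X A = DisCoord 𝔽 A := by
  obtain ⟨X, hX, h⟩ := Nat.sInf_mem (s := {n | ∃ X : Set U,
    LinearIndependent 𝔽 (fun x : X => (x : U)) ∧ n = disCoordX 𝔽 X A})
    ⟨_, ∅, linearIndepOn_empty 𝔽 id, rfl⟩
  exact ⟨X, hX, h.symm⟩

theorem disCoordX_preimage_subtype (W : Submodule 𝔽 U) (X : Set U) :
    disCoordX 𝔽 (W.subtype ⁻¹' X) (fun i => (A i ⊓ W).comap W.subtype) =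
      ∑ i, (finrank 𝔽 ↥(A i ⊓ W) - (X ∩ ↑(A i ⊓ W)).ncard) := by
  refine Finset.sum_congr rfl fun i _ => ?_
  have hset : W.subtype ⁻¹' X ∩ ↑((A i ⊓ W).comap W.subtype) =
      W.subtype ⁻¹' (X ∩ ↑(A i ⊓ W)) := rfl
  rw [(comapSubtypeEquivOfLe inf_le_right).finrank_eq, hset,
    ncard_preimage_of_injective_subset_range W.injective_subtype]
  simpa using inter_subset_right.trans inf_le_right

end DisCoord

theorem Set.ncard_insert_inter_le_ncard_insert_inter {α : Type*} {s t : Set α} {x y : α}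
    (hs : s.Finite) (hy : y ∉ s) (hxy : x ∈ t → y ∈ t) :
    (insert x s ∩ t).ncard ≤ (insert y s ∩ t).ncard := by
  by_cases hx : x ∈ t
  · rw [insert_inter_of_mem hx, insert_inter_of_mem (hxy hx),
      ncard_insert_of_notMem (fun h => hy h.1) (hs.inter_of_left t)]
    exact ncard_insert_le _ _
  · rw [insert_inter_of_notMem hx]
    exact ncard_le_ncard (inter_subset_inter_left _ (subset_insert _ _))
      ((hs.insert y).inter_of_left t)

section Factoring

variable {𝔽 U ι : Type*} [Field 𝔽] [AddCommGroup U] [Module 𝔽 U] [Fintype ι]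
  {m : ℕ} {A : Fin m → Submodule 𝔽 U} {Us : ι → Submodule 𝔽 U}

theorem disCoordX_eq_sum_of_subset_iUnion [FiniteDimensional 𝔽 U] (hUs : iSupIndep Us)
    (hfac : ∀ i, (⨆ j, A i ⊓ Us j) = A i) {X : Set U} (hX : LinearIndepOn 𝔽 id X)
    (hXU : X ⊆ ⋃ j, (Us j : Set U)) :
    disCoordX 𝔽 X A =
      ∑ j, disCoordX 𝔽 ((Us j).subtype ⁻¹' X) (fun i => (A i ⊓ Us j).comap (Us j).subtype) := by
  simp_rw [disCoordX_preimage_subtype]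
  rw [Finset.sum_comm]
  refine Finset.sum_congr rfl fun i _ => ?_
  have hfinrank : finrank 𝔽 ↥(A i) = ∑ j, finrank 𝔽 ↥(A i ⊓ Us j) := by
    rw [← (hUs.mono fun j => inf_le_right).finrank_iSup, hfac]
  have hncard : (X ∩ A i).ncard = ∑ j, (X ∩ ↑(A i ⊓ Us j)).ncard := by
    simpa only [coe_inf, inter_assoc] using hUs.ncard_eq_sum_ncard_inter
      ((LinearIndependent.setFinite hX).inter_of_left _)
      (fun h => hX.zero_notMem_image ⟨0, h.1, rfl⟩) (inter_subset_left.trans hXU)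
  rw [hfinrank, hncard, Finset.sum_tsub_distrib _ fun j _ => ncard_inter_le_finrank hX _]

theorem SubspacesIndep.exists_mem_iUnion_notMem_span (hindep : SubspacesIndep Us)
    (hsum : (⨆ j, Us j) = ⊤) (hfac : ∀ i, (⨆ j, A i ⊓ Us j) = A i) {s : Set U} {x : U}
    (hx : x ∉ span 𝔽 s) :
    ∃ y ∈ ⋃ j, (Us j : Set U), y ∉ span 𝔽 s ∧ ∀ i, x ∈ A i → y ∈ A i := by
  obtain ⟨v, hv, rfl⟩ := exists_sum_eq_of_mem_iSup (hsum ▸ mem_top : x ∈ ⨆ j, Us j)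
  obtain ⟨j, hj⟩ : ∃ j, v j ∉ span 𝔽 s := by
    by_contra! h
    exact hx (sum_mem fun j _ => h j)
  exact ⟨v j, mem_iUnion.2 ⟨j, hv j⟩, hj, fun i hi => hindep.mem_of_sum_mem (hfac i) hv hi j⟩

theorem SubspacesIndep.exists_linearIndepOn_subset_iUnion [FiniteDimensional 𝔽 U]
    (hindep : SubspacesIndep Us) (hsum : (⨆ j, Us j) = ⊤) (hfac : ∀ i, (⨆ j, A i ⊓ Us j) = A i)
    {X : Set U} (hX : LinearIndepOn 𝔽 id X) :
    ∃ X' : Set U, LinearIndepOn 𝔽 id X' ∧ X' ⊆ ⋃ j, (Us j : Set U) ∧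
      ∀ i, (X ∩ A i).ncard ≤ (X' ∩ A i).ncard := by
  have hXfin : X.Finite := LinearIndependent.setFinite hX
  induction hn : (X \ ⋃ j, (Us j : Set U)).ncard generalizing X with
  | zero =>
    exact ⟨X, hX, sdiff_eq_empty.1 ((ncard_eq_zero hXfin.sdiff).1 hn), fun _ => le_rfl⟩
  | succ n ih =>
    obtain ⟨x, hxX, hxU⟩ := nonempty_of_ncard_ne_zero (s := X \ ⋃ j, (Us j : Set U)) (by omega)
    set s := X \ {x}
    have hXs : X = insert x s := (insert_sdiff_self_of_mem hxX).symm
    rw [hXs, linearIndepOn_id_insert fun h => h.2 rfl] at hX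
    obtain ⟨y, hyU, hys, hxy⟩ := hindep.exists_mem_iUnion_notMem_span hsum hfac hX.2
    have hy : LinearIndepOn 𝔽 id (insert y s) :=
      (linearIndepOn_id_insert fun h => hys (subset_span h)).2 ⟨hX.1, hys⟩
    have hyn : (insert y s \ ⋃ j, (Us j : Set U)).ncard = n := by
      have hx : x ∈ X \ ⋃ j, (Us j : Set U) := ⟨hxX, hxU⟩
      rw [insert_sdiff_of_mem _ hyU, sdiff_right_comm, ncard_sdiff_singleton_of_mem hx, hn,
        Nat.add_sub_cancel]
    obtain ⟨X', hX', hX'U, hcard⟩ := ih hy ((hXfin.sdiff).insert y) hyn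
    refine ⟨X', hX', hX'U, fun i => ?_⟩
    rw [hXs]
    exact (ncard_insert_inter_le_ncard_insert_inter hXfin.sdiff
      (fun h => hys (subset_span h)) (hxy i)).trans (hcard i)

end Factoring

/-- If subspaces `A₁, …, A_m` all factor through a decomposition
`U₁, …, U_r` of the whole space `U`, then the discoordination computed in `U` equals
the sum over `j` of the discoordinations of the restricted families
`A₁ ∩ U_j, …, A_m ∩ U_j` computed in `U_j`. -/
theorem disCoord_factors_through_decomposition {𝔽 U : Type*} [Field 𝔽] [AddCommGroup U]
    [Module 𝔽 U] [FiniteDimensional 𝔽 U] {m r : ℕ}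
    (Us : Fin r → Submodule 𝔽 U) (A : Fin m → Submodule 𝔽 U)
    (hindep : SubspacesIndep Us) (hsum : (⨆ j, Us j) = ⊤)
    (hfac : ∀ i, (⨆ j, A i ⊓ Us j) = A i) :
    DisCoord 𝔽 A =
      ∑ j, DisCoord 𝔽 (fun i => (A i ⊓ Us j).comap (Us j).subtype) := by
  have hUs := hindep.iSupIndep
  apply le_antisymm
  · choose Y hY hYeq using fun j =>
      exists_disCoordX_eq_disCoord fun i => (A i ⊓ Us j).comap (Us j).subtype
    have hYU : ∀ j, (Us j).subtype '' Y j ⊆ Us j := fun j => image_subset_iff.2 fun y _ => y.2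
    set X := ⋃ j, (Us j).subtype '' Y j
    have hX : LinearIndepOn 𝔽 id X :=
      hUs.linearIndepOn_iUnion (fun j => (hY j).image (by simp)) hYU
    calc DisCoord 𝔽 A ≤ disCoordX 𝔽 X A := disCoord_le_disCoordX A hX
      _ = ∑ j, disCoordX 𝔽 ((Us j).subtype ⁻¹' X) _ :=
        disCoordX_eq_sum_of_subset_iUnion hUs hfac hX (iUnion_mono hYU)
      _ ≤ ∑ j, disCoordX 𝔽 (Y j) _ := Finset.sum_le_sum fun j _ =>
        disCoordX_le_of_subset _ (LinearIndependent.setFinite (hX.preimage_subtype _))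
          fun y hy => mem_iUnion.2 ⟨j, y, hy, rfl⟩
      _ = _ := Finset.sum_congr rfl fun j _ => hYeq j
  · obtain ⟨X, hX, hXeq⟩ := exists_disCoordX_eq_disCoord A
    obtain ⟨X', hX', hX'U, hcard⟩ := hindep.exists_linearIndepOn_subset_iUnion hsum hfac hX
    calc ∑ j, DisCoord 𝔽 (fun i => (A i ⊓ Us j).comap (Us j).subtype)
        ≤ ∑ j, disCoordX 𝔽 ((Us j).subtype ⁻¹' X') _ := Finset.sum_le_sum fun j _ =>
          disCoord_le_disCoordX _ (hX'.preimage_subtype _)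
      _ = disCoordX 𝔽 X' A := (disCoordX_eq_sum_of_subset_iUnion hUs hfac hX' hX'U).symm
      _ ≤ disCoordX 𝔽 X A := disCoordX_le_of_ncard_inter_le A hcard
      _ = DisCoord 𝔽 A := hXeq
end

section
/- Let A₁,…,A_m (m ≥ 2) be subspaces of a finite-dimensional vector space U over a field, let S_k = S_k(A₁,…,A_m) (with S_{m+1} = 0), and for j ∈ [m] let d_j = (Σ_{i=1}^m dim^{U/S_{j+1}}([A_i ∩ S_j]_{S_{j+1}})) − j·dim(S_j/S_{j+1}). Then d_m = 0 and d_{m−1} = 0. -/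
/-- `d_j = (Σ_{i=1}^m dim^{U/S_{j+1}}([A_i ∩ S_j]_{S_{j+1}})) − j·dim(S_j/S_{j+1})`. -/
noncomputable def dScore (𝔽 : Type*) [Field 𝔽] {U : Type*} [AddCommGroup U]
    [Module 𝔽 U] {m : ℕ} (A : Fin m → Submodule 𝔽 U) (j : ℕ) : ℤ :=
  (∑ i, (Module.finrank 𝔽
      ↥((A i ⊓ interSpan 𝔽 A j).map (interSpan 𝔽 A (j + 1)).mkQ) : ℤ)) -
    (j : ℤ) * (Module.finrank 𝔽
      ↥((interSpan 𝔽 A j).map (interSpan 𝔽 A (j + 1)).mkQ) : ℤ)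


open Submodule Module Finset


section Aux

variable {𝔽 U : Type*} [Field 𝔽] [AddCommGroup U] [Module 𝔽 U] [FiniteDimensional 𝔽 U]

lemma finrank_map_mkQ (S V : Submodule 𝔽 U) :
    finrank 𝔽 (V.map S.mkQ) + finrank 𝔽 ↥(V ⊓ S) = finrank 𝔽 V := by
  have h := LinearMap.finrank_range_add_finrank_ker (S.mkQ ∘ₗ V.subtype)
  have hr : LinearMap.range (S.mkQ ∘ₗ V.subtype) = V.map S.mkQ := by
    rw [LinearMap.range_comp, Submodule.range_subtype]
  have hk : LinearMap.ker (S.mkQ ∘ₗ V.subtype) = comap V.subtype S := by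
    rw [LinearMap.ker_comp, Submodule.ker_mkQ]
  have he : finrank 𝔽 (comap V.subtype S) = finrank 𝔽 ↥(V ⊓ S) := by
    rw [← Submodule.map_comap_subtype]
    exact (Submodule.equivMapOfInjective _ (Submodule.injective_subtype V) _).finrank_eq
  rw [hr, hk, he] at h
  exact h

/-- finrank of a sup of an independent finite family is the sum of finranks. -/
lemma finrank_biSup_of_disjoint {m : ℕ} (C : Fin m → Submodule 𝔽 U)
    (h : ∀ k, C k ⊓ (⨆ l ∈ Finset.univ.erase k, C l) = ⊥) (s : Finset (Fin m)) :
    finrank 𝔽 ↥(⨆ k ∈ s, C k) = ∑ k ∈ s, finrank 𝔽 (C k) := by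
  classical
  induction s using Finset.induction_on with
  | empty => simp
  | @insert a s ha ih =>
    rw [Finset.iSup_insert, Finset.sum_insert ha]
    have hd : C a ⊓ (⨆ k ∈ s, C k) = ⊥ := by
      refine le_antisymm ?_ bot_le
      refine le_trans (inf_le_inf_left _ ?_) (h a).le
      exact iSup₂_le fun l hl => le_iSup₂ (f := fun l (_ : l ∈ Finset.univ.erase a) => C l) l
        (Finset.mem_erase.mpr ⟨fun he => ha (he ▸ hl), Finset.mem_univ l⟩)
    have := Submodule.finrank_sup_add_finrank_inf_eq (C a) (⨆ k ∈ s, C k)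
    rw [hd] at this
    simp only [finrank_bot, add_zero] at this
    rw [this, ih]

end Aux

section Main

variable {𝔽 U : Type*} [Field 𝔽] [AddCommGroup U] [Module 𝔽 U] [FiniteDimensional 𝔽 U]
  {m : ℕ} (A : Fin m → Submodule 𝔽 U)

lemma interSpan_top : interSpan 𝔽 A m = ⨅ i, A i := by
  unfold interSpan
  apply le_antisymm
  · refine iSup₂_le fun s hs => ?_
    have : s = Finset.univ := Finset.eq_univ_of_card s (by simpa using hs)
    subst this
    simp
  · have : (Finset.univ : Finset (Fin m)).card = m := by simp
    refine le_trans ?_ (le_iSup₂ (f := fun (s : Finset (Fin m)) (_ : s.card = m) => ⨅ i ∈ s, A i) Finset.univ this)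
    simp

lemma interSpan_succ_top : interSpan 𝔽 A (m + 1) = ⊥ := by
  unfold interSpan
  refine iSup_eq_bot.mpr fun s => iSup_eq_bot.mpr fun hs => absurd hs ?_
  have := Finset.card_le_univ s
  simp only [Finset.card_univ, Fintype.card_fin] at this
  omega

lemma interSpan_pred (hm : 1 ≤ m) :
    interSpan 𝔽 A (m - 1) = ⨆ k, ⨅ i ∈ Finset.univ.erase k, A i := by
  unfold interSpan
  apply le_antisymm
  · refine iSup₂_le fun s hs => ?_
    have hcard : (Finset.univ \ s).card = 1 := by
      rw [Finset.card_sdiff_of_subset (Finset.subset_univ s)]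
      simp only [hs, Finset.card_univ, Fintype.card_fin]
      omega
    obtain ⟨k, hk⟩ := Finset.card_eq_one.mp hcard
    have hsk : s = Finset.univ.erase k := by
      rw [Finset.erase_eq, ← hk, Finset.sdiff_sdiff_self_left]
      simp
    rw [hsk]
    exact le_iSup (fun k => ⨅ i ∈ Finset.univ.erase k, A i) k
  · refine iSup_le fun k => ?_
    have hc : (Finset.univ.erase k).card = m - 1 := by
      rw [Finset.card_erase_of_mem (Finset.mem_univ k)]
      simp
    exact le_iSup₂ (f := fun (s : Finset (Fin m)) (_ : s.card = m - 1) => ⨅ i ∈ s, A i) _ hc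

end Main

/-- For `m ≥ 2` subspaces `A₁, …, A_m` of a finite-dimensional vector
space, `d_m = 0` and `d_{m−1} = 0`. -/
theorem dScore_top_two_vanish {𝔽 U : Type*} [Field 𝔽] [AddCommGroup U] [Module 𝔽 U]
    [FiniteDimensional 𝔽 U] {m : ℕ} (hm : 2 ≤ m) (A : Fin m → Submodule 𝔽 U) :
    dScore 𝔽 A m = 0 ∧ dScore 𝔽 A (m - 1) = 0 := by
  classical
  obtain ⟨n, rfl⟩ : ∃ n, m = n + 2 := ⟨m - 2, by omega⟩
  constructor
  · -- d_m = 0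
    have hS : interSpan 𝔽 A (n + 2) = ⨅ i, A i := interSpan_top A
    have hinf : ∀ i, A i ⊓ interSpan 𝔽 A (n + 2) = interSpan 𝔽 A (n + 2) := fun i =>
      inf_eq_right.mpr (hS ▸ iInf_le A i)
    unfold dScore
    have hterm : ∀ i : Fin (n + 2),
        ((finrank 𝔽 ((A i ⊓ interSpan 𝔽 A (n + 2)).map
          (interSpan 𝔽 A (n + 2 + 1)).mkQ) : ℕ) : ℤ)
        = ((finrank 𝔽 ((interSpan 𝔽 A (n + 2)).map
          (interSpan 𝔽 A (n + 2 + 1)).mkQ) : ℕ) : ℤ) := fun i => by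
      exact_mod_cast congrArg (fun V : Submodule 𝔽 U =>
        finrank 𝔽 (V.map (interSpan 𝔽 A (n + 2 + 1)).mkQ)) (hinf i)
    rw [Finset.sum_congr rfl fun i _ => hterm i]
    rw [Finset.sum_const, Finset.card_univ, Fintype.card_fin]
    push_cast
    ring
  · -- d_{m-1} = 0
    rw [show n + 2 - 1 = n + 1 from rfl]
    set S : Submodule 𝔽 U := interSpan 𝔽 A (n + 2) with hSdef
    set B : Fin (n + 2) → Submodule 𝔽 U := fun k => ⨅ i ∈ Finset.univ.erase k, A i with hBdef
    have hS : S = ⨅ i, A i := interSpan_top A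
    have hSm1 : interSpan 𝔽 A (n + 1) = ⨆ k, B k := by
      have h := interSpan_pred A (show 1 ≤ n + 2 by omega)
      rw [show n + 2 - 1 = n + 1 from rfl] at h
      exact h
    have hS_le_B : ∀ k, S ≤ B k := fun k => hS ▸ le_iInf₂ fun i _ => iInf_le A i
    have hB_le_A : ∀ k i, i ≠ k → B k ≤ A i := fun k i h =>
      iInf₂_le i (Finset.mem_erase.mpr ⟨h, Finset.mem_univ i⟩)
    have hAB_le_S : ∀ k, A k ⊓ B k ≤ S := by
      intro k
      rw [hS]
      refine le_iInf fun i => ?_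
      by_cases hik : i = k
      · subst hik; exact inf_le_left
      · exact le_trans inf_le_right (hB_le_A k i hik)
    set C : Fin (n + 2) → Submodule 𝔽 (U ⧸ S) := fun k => (B k).map S.mkQ with hCdef
    have hmapbot : Submodule.map S.mkQ S = ⊥ := by
      rw [eq_bot_iff, Submodule.map_le_iff_le_comap]
      intro x hx
      rw [Submodule.mem_comap, Submodule.mem_bot, Submodule.mkQ_apply,
        Submodule.Quotient.mk_eq_zero]
      exact hx
    -- independence of the C's
    have hC : ∀ k, C k ⊓ (⨆ l ∈ Finset.univ.erase k, C l) = ⊥ := by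
      intro k
      have hmap : (⨆ l ∈ Finset.univ.erase k, C l) =
          ((⨆ l ∈ Finset.univ.erase k, B l).map S.mkQ) := by
        simp only [hCdef, Submodule.map_iSup]
      have hcom : comap S.mkQ (C k ⊓ (⨆ l ∈ Finset.univ.erase k, C l)) ≤ S := by
        rw [hmap, Submodule.comap_inf, hCdef]
        rw [Submodule.comap_map_mkQ, Submodule.comap_map_mkQ, sup_eq_right.mpr (hS_le_B k)]
        rw [inf_comm, sup_inf_assoc_of_le _ (hS_le_B k)]
        have hDle : (⨆ l ∈ Finset.univ.erase k, B l) ⊓ B k ≤ S := by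
          refine le_trans (inf_le_inf_right _ (iSup₂_le fun l hl =>
            hB_le_A l k (Finset.ne_of_mem_erase hl).symm)) ?_
          exact hAB_le_S k
        exact sup_le le_rfl hDle
      have hmono := Submodule.map_mono (f := S.mkQ) hcom
      rw [Submodule.map_comap_eq_of_surjective (Submodule.mkQ_surjective S)] at hmono
      rw [hmapbot] at hmono
      exact le_bot_iff.mp hmono
    -- image of A i ⊓ S_{m-1}
    have hmapA : ∀ i, ((A i ⊓ ⨆ k, B k).map S.mkQ) = ⨆ k ∈ Finset.univ.erase i, C k := by
      intro i
      apply le_antisymm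
      · rw [Submodule.map_le_iff_le_comap]
        intro x hx
        obtain ⟨hxA, hxB⟩ := Submodule.mem_inf.mp hx
        obtain ⟨f, hf, hsum⟩ := (Submodule.mem_iSup_iff_exists_finsupp B x).mp hxB
        have hxsum : x = ∑ k, f k := by
          rw [← hsum, Finsupp.sum_fintype]
          intro _; rfl
        have hfi : f i ∈ S := by
          have h1 : f i = x - ∑ k ∈ Finset.univ.erase i, f k := by
            rw [hxsum, ← Finset.add_sum_erase _ f (Finset.mem_univ i)]
            abel
          have h2 : f i ∈ A i := by
            rw [h1]
            refine Submodule.sub_mem _ hxA (Submodule.sum_mem _ fun k hk => ?_)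
            exact hB_le_A k i (Finset.ne_of_mem_erase hk).symm (hf k)
          exact hAB_le_S i (Submodule.mem_inf.mpr ⟨h2, hf i⟩)
        rw [Submodule.mem_comap]
        have hq : S.mkQ x = ∑ k ∈ Finset.univ.erase i, S.mkQ (f k) := by
          rw [hxsum, map_sum, ← Finset.add_sum_erase _ (fun k => S.mkQ (f k))
            (Finset.mem_univ i)]
          have h0 : S.mkQ (f i) = 0 := by
            rw [Submodule.mkQ_apply, Submodule.Quotient.mk_eq_zero]
            exact hfi
          rw [h0, zero_add]
        rw [hq]
        refine Submodule.sum_mem _ fun k hk => ?_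
        exact le_iSup₂ (f := fun k (_ : k ∈ Finset.univ.erase i) => C k) k hk
          (Submodule.mem_map_of_mem (hf k))
      · refine iSup₂_le fun k hk => Submodule.map_mono (le_inf
          (hB_le_A k i (Finset.ne_of_mem_erase hk).symm) (le_iSup B k))
    -- finranks
    have hrank : ∀ s : Finset (Fin (n + 2)),
        finrank 𝔽 ↥(⨆ k ∈ s, C k) = ∑ k ∈ s, finrank 𝔽 (C k) :=
      finrank_biSup_of_disjoint C hC
    have hT : finrank 𝔽 ((⨆ k, B k).map S.mkQ) = ∑ k, finrank 𝔽 (C k) := by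
      rw [Submodule.map_iSup]
      have h1 : (⨆ k, (B k).map S.mkQ) = ⨆ k ∈ (Finset.univ : Finset (Fin (n + 2))), C k := by
        simp [hCdef]
      rw [h1, hrank]
    have hAi : ∀ i, finrank 𝔽 ((A i ⊓ ⨆ k, B k).map S.mkQ)
        = ∑ k ∈ Finset.univ.erase i, finrank 𝔽 (C k) := by
      intro i
      rw [hmapA i, hrank]
    have hcg : ∀ {V W : Submodule 𝔽 U}, V = W →
        finrank 𝔽 (V.map S.mkQ) = finrank 𝔽 (W.map S.mkQ) := fun h =>
      congrArg (fun V : Submodule 𝔽 U => finrank 𝔽 (V.map S.mkQ)) h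
    have hAi' : ∀ i, finrank 𝔽 ((A i ⊓ interSpan 𝔽 A (n + 1)).map S.mkQ)
        = ∑ k ∈ Finset.univ.erase i, finrank 𝔽 (C k) := fun i =>
      (hcg (by rw [hSm1])).trans (hAi i)
    have hT' : finrank 𝔽 ((interSpan 𝔽 A (n + 1)).map S.mkQ) = ∑ k, finrank 𝔽 (C k) :=
      (hcg hSm1).trans hT
    unfold dScore
    show (∑ i, (finrank 𝔽 ((A i ⊓ interSpan 𝔽 A (n + 1)).map S.mkQ) : ℤ)) -
      ((n + 1 : ℕ) : ℤ) * (finrank 𝔽 ((interSpan 𝔽 A (n + 1)).map S.mkQ) : ℤ) = 0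
    simp only [hAi', hT']
    have herase : ∀ i : Fin (n + 2), (∑ k ∈ Finset.univ.erase i, (finrank 𝔽 (C k) : ℤ))
        = (∑ k, (finrank 𝔽 (C k) : ℤ)) - finrank 𝔽 (C i) := by
      intro i
      rw [← Finset.add_sum_erase _ (fun k => (finrank 𝔽 (C k) : ℤ)) (Finset.mem_univ i)]
      ring
    push_cast
    simp only [herase]
    rw [Finset.sum_sub_distrib, Finset.sum_const, Finset.card_univ, Fintype.card_fin]
    ring
end

section
/- Let A₁,…,A_m be subspaces of a finite-dimensional vector space U over a field and let S_k = S_k(A₁,…,A_m). For k = m and for k = m−1, and for any j ∈ [m] and any indices 1 ≤ i₁ < … < i_j ≤ m, the intersection of the images equals the image of the intersection: [A_{i₁}]_{S_k} ∩ … ∩ [A_{i_j}]_{S_k} = [A_{i₁} ∩ … ∩ A_{i_j}]_{S_k} in U/S_k. -/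
open Submodule in
lemma map_mkQ_biInf_of_le {𝔽 U : Type*} [Field 𝔽] [AddCommGroup U] [Module 𝔽 U]
    {ι : Type*} (s : Finset ι) (A : ι → Submodule 𝔽 U) (W : Submodule 𝔽 U)
    (h : ⨅ i ∈ s, (A i ⊔ W) ≤ (⨅ i ∈ s, A i) ⊔ W) :
    (⨅ i ∈ s, (A i).map W.mkQ) = (⨅ i ∈ s, A i).map W.mkQ := by
  apply le_antisymm
  · have h1 : (⨅ i ∈ s, (A i).map W.mkQ)
        = Submodule.map W.mkQ (Submodule.comap W.mkQ (⨅ i ∈ s, (A i).map W.mkQ)) := by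
      rw [Submodule.map_comap_eq, Submodule.range_mkQ, top_inf_eq]
    rw [h1]
    have h2 : Submodule.comap W.mkQ (⨅ i ∈ s, (A i).map W.mkQ)
        = ⨅ i ∈ s, (A i ⊔ W) := by
      simp only [Submodule.comap_iInf, Submodule.comap_map_eq, Submodule.ker_mkQ]
    rw [h2]
    calc Submodule.map W.mkQ (⨅ i ∈ s, (A i ⊔ W))
        ≤ Submodule.map W.mkQ ((⨅ i ∈ s, A i) ⊔ W) := Submodule.map_mono h
      _ = (⨅ i ∈ s, A i).map W.mkQ := by
          rw [Submodule.map_sup, Submodule.mkQ_map_self, sup_bot_eq]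
  · exact le_iInf₂ fun i hi => Submodule.map_mono (biInf_le A hi)

/-- For `k = m` and `k = m − 1`, and for any nonempty collection of
indices `i₁ < … < i_j`, the intersection of the images of the `A_{i_l}` in `U/S_k`
equals the image of their intersection:
`[A_{i₁}]_{S_k} ∩ … ∩ [A_{i_j}]_{S_k} = [A_{i₁} ∩ … ∩ A_{i_j}]_{S_k}`. -/
theorem image_inter_eq_inter_image_top_two {𝔽 U : Type*} [Field 𝔽] [AddCommGroup U]
    [Module 𝔽 U] [FiniteDimensional 𝔽 U] {m : ℕ} (A : Fin m → Submodule 𝔽 U)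
    (s : Finset (Fin m)) (hs : s.Nonempty) :
    ((⨅ i ∈ s, (A i).map (interSpan 𝔽 A m).mkQ) =
      (⨅ i ∈ s, A i).map (interSpan 𝔽 A m).mkQ) ∧
    ((⨅ i ∈ s, (A i).map (interSpan 𝔽 A (m - 1)).mkQ) =
      (⨅ i ∈ s, A i).map (interSpan 𝔽 A (m - 1)).mkQ) := by
  obtain ⟨i₀, hi₀⟩ := hs
  have hm : 0 < m := i₀.pos
  constructor
  · -- k = m
    apply map_mkQ_biInf_of_le
    have hSm : ∀ i : Fin m, interSpan 𝔽 A m ≤ A i := by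
      intro i
      apply iSup₂_le
      intro t ht
      have : t = Finset.univ := Finset.eq_univ_of_card t (by simpa using ht)
      subst this
      exact biInf_le A (Finset.mem_univ i)
    refine le_sup_of_le_left (iInf₂_mono fun i hi => sup_le le_rfl (hSm i))
  · -- k = m - 1
    apply map_mkQ_biInf_of_le
    set S := interSpan 𝔽 A (m - 1) with hS
    set B : Fin m → Submodule 𝔽 U := fun i => ⨅ j ∈ Finset.univ.erase i, A j with hB
    have hBS : ∀ i, B i ≤ S := by
      intro i
      have hcard : (Finset.univ.erase i).card = m - 1 := by
        rw [Finset.card_erase_of_mem (Finset.mem_univ i)]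
        simp
      exact le_iSup₂_of_le (Finset.univ.erase i) hcard le_rfl
    have hSB : ∀ i, S ≤ A i ⊔ B i := by
      intro i
      apply iSup₂_le
      intro t ht
      -- t has card m-1, so t = univ.erase j for some j
      have hcompl : tᶜ.card = 1 := by
        rw [Finset.card_compl, ht]
        simp
        omega
      obtain ⟨j, hj⟩ := Finset.card_eq_one.mp hcompl
      have htj : t = Finset.univ.erase j := by
        have : t = tᶜᶜ := by simp
        rw [this, hj]
        ext x
        simp [Finset.mem_erase, eq_comm]
      subst htj
      by_cases hij : j = i
      · subst hij
        exact le_sup_of_le_right le_rfl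
      · refine le_sup_of_le_left (biInf_le A ?_)
        exact Finset.mem_erase.mpr ⟨fun h => hij h.symm, Finset.mem_univ i⟩
    intro x hx
    simp only [Submodule.mem_iInf] at hx
    have hx' : ∀ i ∈ s, ∃ a ∈ A i, ∃ b ∈ B i, a + b = x := by
      intro i hi
      exact Submodule.mem_sup.mp
        ((sup_le_sup_left (hSB i) (A i)).trans_eq (by rw [← sup_assoc, sup_idem]) (hx i hi))
    choose a ha b hb hab using hx'
    set t : U := ∑ i ∈ s.attach, b i.1 i.2 with hts
    have htS : t ∈ S := Submodule.sum_mem _ fun i _ => hBS i.1 (hb i.1 i.2)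
    have hy : ∀ j (hj : j ∈ s), x - t ∈ A j := by
      intro j hj
      have hsum : t = b j hj + ∑ i ∈ s.attach.erase ⟨j, hj⟩, b i.1 i.2 := by
        rw [hts, ← Finset.add_sum_erase s.attach _ (Finset.mem_attach s ⟨j, hj⟩)]
      have hxt : x - t = a j hj - ∑ i ∈ s.attach.erase ⟨j, hj⟩, b i.1 i.2 := by
        rw [hsum, ← hab j hj]; abel
      rw [hxt]
      refine sub_mem (ha j hj) (Submodule.sum_mem _ ?_)
      intro i hi
      have hne : i.1 ≠ j := by
        intro h
        exact (Finset.mem_erase.mp hi).1 (Subtype.ext h)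
      have : B i.1 ≤ A j :=
        biInf_le A (Finset.mem_erase.mpr ⟨hne.symm, Finset.mem_univ j⟩)
      exact this (hb i.1 i.2)
    have : x = (x - t) + t := by abel
    rw [this]
    exact Submodule.add_mem_sup ((by simp only [Submodule.mem_iInf]; exact hy)) htS
end

section
/- (Lifting Lemma) Let A, B, C be subspaces of a finite-dimensional vector space U over a field, and let S₂ = (A ∩ B) + (A ∩ C) + (B ∩ C). If ã ∈ A, b̃ ∈ B, c̃ ∈ C satisfy [ã + b̃]_{S₂} = [c̃]_{S₂}, then there exist a ∈ A, b ∈ B, c ∈ C with a + b = c and [a]_{S₂} = [ã]_{S₂}, [b]_{S₂} = [b̃]_{S₂}, [c]_{S₂} = [c̃]_{S₂}. In particular, [A + B]_{S₂} ∩ [C]_{S₂} = [(A + B) ∩ C]_{S₂} in U/S₂. -/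
/-- **Lifting Lemma.** Let `A, B, C` be subspaces of a finite-dimensional
vector space and `S₂ = (A ∩ B) + (A ∩ C) + (B ∩ C)`. If `a' ∈ A`, `b' ∈ B`, `c' ∈ C`
satisfy `[a' + b']_{S₂} = [c']_{S₂}`, then there exist `a ∈ A`, `b ∈ B`, `c ∈ C` with
`a + b = c` lying in the same `S₂`-cosets as `a', b', c'` respectively. In particular,
`[A + B]_{S₂} ∩ [C]_{S₂} = [(A + B) ∩ C]_{S₂}` in `U/S₂`. -/
theorem lifting_lemma {𝔽 U : Type*} [Field 𝔽] [AddCommGroup U] [Module 𝔽 U]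
    [FiniteDimensional 𝔽 U] (A B C : Submodule 𝔽 U) (S₂ : Submodule 𝔽 U)
    (hS₂ : S₂ = (A ⊓ B) ⊔ (A ⊓ C) ⊔ (B ⊓ C)) :
    (∀ a' b' c' : U, a' ∈ A → b' ∈ B → c' ∈ C →
      S₂.mkQ (a' + b') = S₂.mkQ c' →
      ∃ a b c : U, a ∈ A ∧ b ∈ B ∧ c ∈ C ∧ a + b = c ∧
        S₂.mkQ a = S₂.mkQ a' ∧ S₂.mkQ b = S₂.mkQ b' ∧ S₂.mkQ c = S₂.mkQ c') ∧
    (A ⊔ B).map S₂.mkQ ⊓ C.map S₂.mkQ = ((A ⊔ B) ⊓ C).map S₂.mkQ := by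
  have key : ∀ a' b' c' : U, a' ∈ A → b' ∈ B → c' ∈ C →
      S₂.mkQ (a' + b') = S₂.mkQ c' →
      ∃ a b c : U, a ∈ A ∧ b ∈ B ∧ c ∈ C ∧ a + b = c ∧
        S₂.mkQ a = S₂.mkQ a' ∧ S₂.mkQ b = S₂.mkQ b' ∧ S₂.mkQ c = S₂.mkQ c' := by
    intro a' b' c' ha hb hc h
    have hmem : a' + b' - c' ∈ S₂ := by
      rwa [Submodule.mkQ_apply, Submodule.mkQ_apply, Submodule.Quotient.eq] at h
    rw [hS₂] at hmem
    rcases Submodule.mem_sup.mp hmem with ⟨w, hw, z, hz, hwz⟩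
    rcases Submodule.mem_sup.mp hw with ⟨x, hx, y, hy, hxy⟩
    refine ⟨a' - x - y, b' - z, c', ?_, ?_, hc, ?_, ?_, ?_, rfl⟩
    · exact A.sub_mem (A.sub_mem ha hx.1) hy.1
    · exact B.sub_mem hb hz.1
    · have h1 : x + y + z = a' + b' - c' := by rw [← hwz, ← hxy]
      have h2 : c' = a' + b' - (x + y + z) := by rw [h1]; abel
      rw [h2]; abel
    · simp only [Submodule.mkQ_apply, Submodule.Quotient.eq]
      have : a' - x - y - a' = -(x + y) := by abel
      rw [this]
      exact S₂.neg_mem (by rw [hS₂]; exact Submodule.mem_sup_left (Submodule.add_mem _ (Submodule.mem_sup_left hx) (Submodule.mem_sup_right hy)))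
    · simp only [Submodule.mkQ_apply, Submodule.Quotient.eq]
      have : b' - z - b' = -z := by abel
      rw [this]
      exact S₂.neg_mem (by rw [hS₂]; exact Submodule.mem_sup_right hz)
  refine ⟨key, ?_⟩
  apply le_antisymm
  · rintro q ⟨⟨s, hs, rfl⟩, ⟨c', hc', hcq⟩⟩
    rcases Submodule.mem_sup.mp hs with ⟨a', ha', b', hb', rfl⟩
    rcases key a' b' c' ha' hb' hc' hcq.symm with ⟨a, b, c, hA, hB, hC, habc, hqa, hqb, hqc⟩
    refine ⟨c, ⟨?_, hC⟩, ?_⟩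
    · exact habc ▸ Submodule.add_mem _ (Submodule.mem_sup_left hA) (Submodule.mem_sup_right hB)
    · rw [hqc]; exact hcq
  · exact le_inf (Submodule.map_mono inf_le_left) (Submodule.map_mono inf_le_right)
end

section
/- Let A, B, C be subspaces of a finite-dimensional vector space U over a field. Then DisCoord(A, B, C) equals each of the following: (1) dim(A ∩ B ∩ C) − I(A;B;C), where I(A;B;C) = dim(A+B+C) − dim(A+B) − dim(A+C) − dim(B+C) + dim A + dim B + dim C; (2) dim(C ∩ (A+B)) − dim(C ∩ A) − dim(C ∩ B) + dim(A ∩ B ∩ C); and (3) dim((A+C) ∩ (B+C)) − dim((A ∩ B) + C). -/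
/-!
Write `D = dim((A+C) ∩ (B+C)) - dim((A ∩ B) + C)`; by the Grassmann formula all three expressions
equal `D`, so the point is `DisCoord(A,B,C) = D`. Call a linearly independent set `X` adapted to `W`
when `X ∩ W` spans `W`.

Lower bound: by inclusion–exclusion, `|X∩A| + |X∩B| + |X∩C|` equals
`|X∩A∩B| + |(X∩A ∪ X∩B) ∩ C| + |X ∩ (A∪B∪C)|`, and these three sets are independent subsets of
`A∩B`, `A∩C + B∩C` and `A+B+C`.

Upper bound: extending `X` by vectors of `W` yields a set adapted to `W` as soon as `span X ∩ W` is
already spanned by `X ∩ W`. Extending successively through `A∩C ∩ B∩C`, `A∩C`, `B∩C`, `A∩B`, `A`,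
`B`, the modular law keeps this condition true at every step, so the result is adapted to `A`
and `B` and `span (X ∩ C)` contains `A∩C + B∩C`. A last extension by `C`, which adds
`dim(A+B+C) - dim(A+B)` vectors of `C`, brings the `C`-term down to `D`.
-/

open Submodule Set Module

section

variable {𝔽 U : Type*} [Field 𝔽] [AddCommGroup U] [Module 𝔽 U]

theorem disCoordX_three_eq (X : Set U) (A B C : Submodule 𝔽 U) :
    disCoordX 𝔽 X ![A, B, C] = (finrank 𝔽 A - (X ∩ A).ncard) + (finrank 𝔽 B - (X ∩ B).ncard) +
      (finrank 𝔽 C - (X ∩ C).ncard) := by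
  simp only [disCoordX, Fin.sum_univ_three]
  rfl

theorem span_le_sup_span_inter_of_subset_union {X Y W : Set U} (hY : Y ⊆ X ∪ W) :
    span 𝔽 Y ≤ span 𝔽 X ⊔ span 𝔽 (Y ∩ W) := by
  rw [← span_union]
  exact span_mono fun y hy => (hY hy).imp_right fun hW => ⟨hy, hW⟩

theorem LinearIndepOn.exists_extension_le_span_inter {X : Set U} (hX : LinearIndepOn 𝔽 id X)
    {W : Submodule 𝔽 U} (hXW : span 𝔽 X ⊓ W ≤ span 𝔽 (X ∩ W)) :
    ∃ Y, X ⊆ Y ∧ LinearIndepOn 𝔽 id Y ∧ span 𝔽 Y ≤ span 𝔽 X ⊔ W ∧ W ≤ span 𝔽 (Y ∩ W) := by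
  obtain ⟨Y, hY, hXY, hspan, hYli⟩ := exists_linearIndepOn_id_extension hX subset_union_left
  refine ⟨Y, hXY, hYli, ?_, fun w hw => ?_⟩
  · calc span 𝔽 Y ≤ span 𝔽 (X ∪ W) := span_mono hY
      _ = span 𝔽 X ⊔ W := by rw [span_union, span_eq]
  · obtain ⟨x, hx, v, hv, rfl⟩ :=
      mem_sup.mp (span_le_sup_span_inter_of_subset_union hY (hspan (Or.inr hw)))
    have hvW : v ∈ W := span_le.mpr inter_subset_right hv
    have hxW : x ∈ W := by simpa using W.sub_mem hw hvW
    exact add_mem (span_mono (inter_subset_inter_left _ hXY) (hXW ⟨hx, hxW⟩)) hv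

theorem exists_linearIndepOn_adapted_pair (P Q : Submodule 𝔽 U) :
    ∃ X, LinearIndepOn 𝔽 id X ∧ span 𝔽 X ≤ P ⊔ Q ∧ P ⊓ Q ≤ span 𝔽 (X ∩ (P ⊓ Q)) ∧
      P ≤ span 𝔽 (X ∩ P) ∧ Q ≤ span 𝔽 (X ∩ Q) := by
  obtain ⟨X₁, -, hX₁, hspan₁, hPQ⟩ :=
    (linearIndepOn_empty 𝔽 id).exists_extension_le_span_inter (W := P ⊓ Q) (by simp)
  rw [span_empty, bot_sup_eq] at hspan₁
  obtain ⟨X₂, h₁₂, hX₂, hspan₂, hP⟩ := hX₁.exists_extension_le_span_inter (W := P) <|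
    calc span 𝔽 X₁ ⊓ P ≤ P ⊓ Q := inf_le_left.trans hspan₁
      _ ≤ span 𝔽 (X₁ ∩ P) := hPQ.trans (span_mono (inter_subset_inter_right _ inf_le_left))
  have hspan₂' : span 𝔽 X₂ ≤ P := hspan₂.trans (sup_le (hspan₁.trans inf_le_left) le_rfl)
  obtain ⟨X₃, h₂₃, hX₃, hspan₃, hQ⟩ := hX₂.exists_extension_le_span_inter (W := Q) <|
    calc span 𝔽 X₂ ⊓ Q ≤ P ⊓ Q := inf_le_inf_right Q hspan₂'
      _ ≤ span 𝔽 (X₂ ∩ Q) := hPQ.trans (span_mono (inter_subset_inter h₁₂ inf_le_right))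
  refine ⟨X₃, hX₃, hspan₃.trans (sup_le_sup_right hspan₂' Q), ?_, ?_, hQ⟩
  · exact hPQ.trans (span_mono (inter_subset_inter_left _ (h₁₂.trans h₂₃)))
  · exact hP.trans (span_mono (inter_subset_inter_left _ h₂₃))

theorem exists_linearIndepOn_adapted_triple (A B C : Submodule 𝔽 U) :
    ∃ X, LinearIndepOn 𝔽 id X ∧ span 𝔽 X ≤ A ⊔ B ∧ A ≤ span 𝔽 (X ∩ A) ∧ B ≤ span 𝔽 (X ∩ B) ∧
      A ⊓ C ⊔ B ⊓ C ≤ span 𝔽 (X ∩ C) := by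
  obtain ⟨X₁, hX₁, hspan₁, hABC, hAC, hBC⟩ := exists_linearIndepOn_adapted_pair (A ⊓ C) (B ⊓ C)
  obtain ⟨X₂, h₁₂, hX₂, hspan₂, hAB⟩ := hX₁.exists_extension_le_span_inter (W := A ⊓ B) <|
    calc span 𝔽 X₁ ⊓ (A ⊓ B) ≤ C ⊓ (A ⊓ B) :=
          inf_le_inf_right _ (hspan₁.trans (sup_le inf_le_right inf_le_right))
      _ ≤ A ⊓ C ⊓ (B ⊓ C) := fun x ⟨hC, hA, hB⟩ => ⟨⟨hA, hC⟩, hB, hC⟩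
      _ ≤ span 𝔽 (X₁ ∩ (A ⊓ B)) := hABC.trans (span_mono (inter_subset_inter_right _
          fun x ⟨⟨hA, _⟩, hB, _⟩ => ⟨hA, hB⟩))
  have hspan₂' : span 𝔽 X₂ ≤ A ⊓ C ⊔ A ⊓ B ⊔ B ⊓ C := by order
  obtain ⟨X₃, h₂₃, hX₃, hspan₃, hA⟩ := hX₂.exists_extension_le_span_inter (W := A) <|
    calc span 𝔽 X₂ ⊓ A ≤ (A ⊓ C ⊔ A ⊓ B ⊔ B ⊓ C) ⊓ A := inf_le_inf_right _ hspan₂'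
      _ = A ⊓ C ⊔ A ⊓ B ⊔ B ⊓ C ⊓ A := sup_inf_assoc_of_le _ (sup_le inf_le_left inf_le_left)
      _ ≤ A ⊓ C ⊔ A ⊓ B := sup_le le_rfl fun x ⟨⟨_, hC⟩, hA⟩ => mem_sup_left ⟨hA, hC⟩
      _ ≤ span 𝔽 (X₂ ∩ A) := sup_le (hAC.trans (span_mono (inter_subset_inter h₁₂ inf_le_left)))
          (hAB.trans (span_mono (inter_subset_inter_right _ inf_le_left)))
  have hspan₃' : span 𝔽 X₃ ≤ B ⊓ C ⊔ A := by order
  obtain ⟨X₄, h₃₄, hX₄, hspan₄, hB⟩ := hX₃.exists_extension_le_span_inter (W := B) <|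
    calc span 𝔽 X₃ ⊓ B ≤ (B ⊓ C ⊔ A) ⊓ B := inf_le_inf_right _ hspan₃'
      _ = B ⊓ C ⊔ A ⊓ B := sup_inf_assoc_of_le _ inf_le_left
      _ ≤ span 𝔽 (X₃ ∩ B) := sup_le
          (hBC.trans (span_mono (inter_subset_inter (h₁₂.trans h₂₃) inf_le_left)))
          (hAB.trans (span_mono (inter_subset_inter h₂₃ inf_le_right)))
  refine ⟨X₄, hX₄, by order, hA.trans (span_mono (inter_subset_inter_left _ h₃₄)), hB, ?_⟩
  have h₁₄ : X₁ ⊆ X₄ := h₁₂.trans (h₂₃.trans h₃₄)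
  exact sup_le (hAC.trans (span_mono (inter_subset_inter h₁₄ inf_le_right)))
    (hBC.trans (span_mono (inter_subset_inter h₁₄ inf_le_right)))

section FiniteDimensional

variable [FiniteDimensional 𝔽 U]

theorem LinearIndepOn.ncard_eq_finrank_span {s : Set U} (hs : LinearIndepOn 𝔽 id s) :
    s.ncard = finrank 𝔽 (span 𝔽 s) := by
  have := hs.setFinite.fintype
  rw [finrank_span_set_eq_card hs, ncard_eq_toFinset_card']

theorem LinearIndepOn.ncard_le_finrank {s : Set U} (hs : LinearIndepOn 𝔽 id s)
    {W : Submodule 𝔽 U} (hsW : s ⊆ W) : s.ncard ≤ finrank 𝔽 W :=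
  hs.ncard_eq_finrank_span.trans_le (Submodule.finrank_mono (span_le.mpr hsW))

theorem LinearIndepOn.finrank_le_ncard_inter {X : Set U} (hX : LinearIndepOn 𝔽 id X)
    {W : Submodule 𝔽 U} (hW : W ≤ span 𝔽 (X ∩ W)) : finrank 𝔽 W ≤ (X ∩ W).ncard :=
  (Submodule.finrank_mono hW).trans_eq (hX.mono inter_subset_left).ncard_eq_finrank_span.symm

theorem LinearIndepOn.ncard_inter_add_ncard_inter_add_ncard_inter_le {X : Set U}
    (hX : LinearIndepOn 𝔽 id X) (A B C : Submodule 𝔽 U) :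
    (X ∩ A).ncard + (X ∩ B).ncard + (X ∩ C).ncard ≤
      finrank 𝔽 ↥(A ⊓ B) + finrank 𝔽 ↥(A ⊓ C ⊔ B ⊓ C) + finrank 𝔽 ↥(A ⊔ B ⊔ C) := by
  have hfin : ∀ W : Submodule 𝔽 U, (X ∩ W).Finite := fun W => hX.setFinite.inter_of_left _
  have hAB := ncard_inter_add_ncard_union (X ∩ A) (X ∩ B) (hfin A) (hfin B)
  have hABC := ncard_inter_add_ncard_union (X ∩ A ∪ X ∩ B) (X ∩ C) ((hfin A).union (hfin B))
    (hfin C)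
  have h₁ : (X ∩ A ∩ (X ∩ B)).ncard ≤ finrank 𝔽 ↥(A ⊓ B) :=
    (hX.mono fun x hx => hx.1.1).ncard_le_finrank fun x ⟨⟨_, hA⟩, _, hB⟩ => ⟨hA, hB⟩
  have h₂ : ((X ∩ A ∪ X ∩ B) ∩ (X ∩ C)).ncard ≤ finrank 𝔽 ↥(A ⊓ C ⊔ B ⊓ C) := by
    refine (hX.mono fun x hx => hx.2.1).ncard_le_finrank ?_
    rintro x ⟨⟨-, hA⟩ | ⟨-, hB⟩, -, hC⟩
    exacts [mem_sup_left ⟨hA, hC⟩, mem_sup_right ⟨hB, hC⟩]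
  have h₃ : (X ∩ A ∪ X ∩ B ∪ X ∩ C).ncard ≤ finrank 𝔽 ↥(A ⊔ B ⊔ C) := by
    refine (hX.mono ?_).ncard_le_finrank ?_
    · rintro x ((⟨hx, -⟩ | ⟨hx, -⟩) | ⟨hx, -⟩) <;> exact hx
    · rintro x ((⟨-, hA⟩ | ⟨-, hB⟩) | ⟨-, hC⟩)
      exacts [mem_sup_left (mem_sup_left hA), mem_sup_left (mem_sup_right hB), mem_sup_right hC]
  omega

theorem exists_linearIndepOn_finrank_le_ncard_inter (A B C : Submodule 𝔽 U) :
    ∃ X : Set U, LinearIndepOn 𝔽 id X ∧ finrank 𝔽 A ≤ (X ∩ A).ncard ∧ finrank 𝔽 B ≤ (X ∩ B).ncard ∧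
      finrank 𝔽 ↥(A ⊓ C ⊔ B ⊓ C) + finrank 𝔽 ↥(A ⊔ B ⊔ C) ≤
        (X ∩ C).ncard + finrank 𝔽 ↥(A ⊔ B) := by
  obtain ⟨X, hX, hspan, hA, hB, hABC⟩ := exists_linearIndepOn_adapted_triple A B C
  obtain ⟨Y, hYsub, hXY, hspanY, hY⟩ := exists_linearIndepOn_id_extension hX
    (subset_union_left : X ⊆ X ∪ C)
  have hsup : A ⊔ B ⊔ C ≤ span 𝔽 (Y ∩ C) ⊔ (A ⊔ B) := by
    have hC : C ≤ span 𝔽 X ⊔ span 𝔽 (Y ∩ C) := fun c hc =>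
      span_le_sup_span_inter_of_subset_union hYsub (hspanY (Or.inr hc))
    order
  have hinf : A ⊓ C ⊔ B ⊓ C ≤ span 𝔽 (Y ∩ C) ⊓ (A ⊔ B) :=
    le_inf (hABC.trans (span_mono (inter_subset_inter_left _ hXY))) (by order)
  have hgrass := Submodule.finrank_sup_add_finrank_inf_eq (span 𝔽 (Y ∩ C)) (A ⊔ B)
  have h₁ := Submodule.finrank_mono hsup
  have h₂ := Submodule.finrank_mono hinf
  refine ⟨Y, hY, hY.finrank_le_ncard_inter (hA.trans (span_mono (inter_subset_inter_left _ hXY))),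
    hY.finrank_le_ncard_inter (hB.trans (span_mono (inter_subset_inter_left _ hXY))), ?_⟩
  rw [(hY.mono inter_subset_left).ncard_eq_finrank_span]
  omega

theorem finrank_sup_inf_sup_add_eq (A B C : Submodule 𝔽 U) :
    finrank 𝔽 ↥((A ⊔ C) ⊓ (B ⊔ C)) + finrank 𝔽 ↥(A ⊓ B) + finrank 𝔽 ↥(A ⊓ C ⊔ B ⊓ C) +
        finrank 𝔽 ↥(A ⊔ B ⊔ C) =
      finrank 𝔽 A + finrank 𝔽 B + finrank 𝔽 C + finrank 𝔽 ↥(A ⊓ B ⊔ C) := by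
  have hAC := Submodule.finrank_sup_add_finrank_inf_eq A C
  have hBC := Submodule.finrank_sup_add_finrank_inf_eq B C
  have hACBC := Submodule.finrank_sup_add_finrank_inf_eq (A ⊓ C) (B ⊓ C)
  have hABinfC := Submodule.finrank_sup_add_finrank_inf_eq (A ⊓ B) C
  have hsup := Submodule.finrank_sup_add_finrank_inf_eq (A ⊔ C) (B ⊔ C)
  rw [show A ⊓ C ⊓ (B ⊓ C) = A ⊓ B ⊓ C by order] at hACBC
  rw [show A ⊔ C ⊔ (B ⊔ C) = A ⊔ B ⊔ C by order] at hsup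
  omega

theorem disCoord_three_eq (A B C : Submodule 𝔽 U) :
    DisCoord 𝔽 ![A, B, C] = finrank 𝔽 ↥((A ⊔ C) ⊓ (B ⊔ C)) - finrank 𝔽 ↥(A ⊓ B ⊔ C) := by
  have hdim := finrank_sup_inf_sup_add_eq A B C
  have hAB := Submodule.finrank_sup_add_finrank_inf_eq A B
  obtain ⟨X, hX, hA, hB, hC⟩ := exists_linearIndepOn_finrank_le_ncard_inter A B C
  unfold DisCoord
  refine le_antisymm (le_trans (Nat.sInf_le ⟨X, hX, rfl⟩) ?_) (le_csInf ⟨_, X, hX, rfl⟩ ?_)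
  · rw [disCoordX_three_eq]
    omega
  · rintro _ ⟨Y, hY, rfl⟩
    have := LinearIndepOn.ncard_inter_add_ncard_inter_add_ncard_inter_le hY A B C
    rw [disCoordX_three_eq]
    omega

end FiniteDimensional

end

/-- Formulas for the discoordination of three subspaces:
(1) `DisCoord(A,B,C) = dim(A∩B∩C) − I(A;B;C)` where
`I(A;B;C) = dim(A+B+C) − dim(A+B) − dim(A+C) − dim(B+C) + dim A + dim B + dim C`;
(2) `DisCoord(A,B,C) = dim(C∩(A+B)) − dim(C∩A) − dim(C∩B) + dim(A∩B∩C)`;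
(3) `DisCoord(A,B,C) = dim((A+C)∩(B+C)) − dim((A∩B)+C)`. -/
theorem disCoord_three_formulas {𝔽 U : Type*} [Field 𝔽] [AddCommGroup U] [Module 𝔽 U]
    [FiniteDimensional 𝔽 U] (A B C : Submodule 𝔽 U) :
    ((DisCoord 𝔽 ![A, B, C] : ℤ) =
      (Module.finrank 𝔽 ↥(A ⊓ B ⊓ C) : ℤ) -
        ((Module.finrank 𝔽 ↥(A ⊔ B ⊔ C) : ℤ) -
          (Module.finrank 𝔽 ↥(A ⊔ B) : ℤ) - (Module.finrank 𝔽 ↥(A ⊔ C) : ℤ) -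
          (Module.finrank 𝔽 ↥(B ⊔ C) : ℤ) +
          (Module.finrank 𝔽 ↥A : ℤ) + (Module.finrank 𝔽 ↥B : ℤ) +
          (Module.finrank 𝔽 ↥C : ℤ))) ∧
    ((DisCoord 𝔽 ![A, B, C] : ℤ) =
      (Module.finrank 𝔽 ↥(C ⊓ (A ⊔ B)) : ℤ) - (Module.finrank 𝔽 ↥(C ⊓ A) : ℤ) -
        (Module.finrank 𝔽 ↥(C ⊓ B) : ℤ) + (Module.finrank 𝔽 ↥(A ⊓ B ⊓ C) : ℤ)) ∧
    ((DisCoord 𝔽 ![A, B, C] : ℤ) =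
      (Module.finrank 𝔽 ↥((A ⊔ C) ⊓ (B ⊔ C)) : ℤ) -
        (Module.finrank 𝔽 ↥((A ⊓ B) ⊔ C) : ℤ)) := by
  have hD := disCoord_three_eq A B C
  have hle : finrank 𝔽 ↥(A ⊓ B ⊔ C) ≤ finrank 𝔽 ↥((A ⊔ C) ⊓ (B ⊔ C)) :=
    Submodule.finrank_mono (by order)
  have hAB := Submodule.finrank_sup_add_finrank_inf_eq A B
  have hAC := Submodule.finrank_sup_add_finrank_inf_eq A C
  have hBC := Submodule.finrank_sup_add_finrank_inf_eq B C
  have hABsupC := Submodule.finrank_sup_add_finrank_inf_eq (A ⊔ B) C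
  have hABinfC := Submodule.finrank_sup_add_finrank_inf_eq (A ⊓ B) C
  have hsup := Submodule.finrank_sup_add_finrank_inf_eq (A ⊔ C) (B ⊔ C)
  rw [show A ⊔ C ⊔ (B ⊔ C) = A ⊔ B ⊔ C by order] at hsup
  rw [inf_comm C (A ⊔ B), inf_comm C A, inf_comm C B]
  refine ⟨?_, ?_, ?_⟩ <;> omega
end
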